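/- arXiv:1610.03261 — 6 statements merged into one kernel-verified Lean document; each statement's English description precedes it below -/
import Mathlib

section
/- Let K ⊆ ℝ^d be a nonempty compact set. For all x₁, y₁, x₂, y₂ ∈ ℝ^d one has |1_K(y₁ − x₁) − 1_K(y₂ − x₂)| ≤ 1_{∂^{2|x₁−x₂|}K}(y₁ − x₁) + 1_{∂^{2|y₁−y₂|}K}(y₁ − x₁), where 1_A denotes the indicator function of a set A. -/
open MeasureTheory Metric Set Pointwise

noncomputable section

/-- Euclidean space `ℝ^d`. -/
abbrev Euc (d : ℕ) := EuclideanSpace ℝ (Fin d)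

/-- The `ε`-boundary of a set `A ⊆ ℝ^d`: `∂^ε A = {x + y : x ∈ ∂A, ‖y‖ ≤ ε}`. -/
def epsBdry {d : ℕ} (A : Set (Euc d)) (ε : ℝ) : Set (Euc d) :=
  frontier A + Metric.closedBall 0 ε

lemma exists_frontier_dist_le {d : ℕ} (K : Set (Euc d)) {a b : Euc d}
    (ha : a ∈ K) (hb : b ∉ K) : ∃ w ∈ frontier K, dist a w ≤ dist a b := by
  have hconn : IsPreconnected ((segment ℝ a b)) := (convex_segment a b).isPreconnected
  have hne : ((segment ℝ a b) ∩ frontier K).Nonempty := by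
    by_contra h
    rw [not_nonempty_iff_eq_empty] at h
    have h1 : (segment ℝ a b) ⊆ interior K ∪ (closure K)ᶜ := by
      intro x hx
      have hxf : x ∉ frontier K := fun hf => by
        have : x ∈ (segment ℝ a b) ∩ frontier K := ⟨hx, hf⟩
        simp [h] at this
      rcases em (x ∈ closure K) with hc | hc
      · left
        rcases em (x ∈ interior K) with hi | hi
        · exact hi
        · exact absurd ⟨hc, hi⟩ hxf
      · right; exact hc
    have ha' : a ∈ (segment ℝ a b) ∩ interior K := by
      refine ⟨left_mem_segment ℝ a b, ?_⟩
      have hc : a ∈ closure K := subset_closure ha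
      rcases em (a ∈ interior K) with hi | hi
      · exact hi
      · exfalso
        have hf : a ∈ frontier K := ⟨hc, hi⟩
        have : a ∈ (segment ℝ a b) ∩ frontier K := ⟨left_mem_segment ℝ a b, hf⟩
        simp [h] at this
    have hb' : b ∈ (segment ℝ a b) ∩ (closure K)ᶜ := by
      refine ⟨right_mem_segment ℝ a b, fun hc => ?_⟩
      have : b ∈ frontier K := ⟨hc, fun hi => hb (interior_subset hi)⟩
      have : b ∈ (segment ℝ a b) ∩ frontier K := ⟨right_mem_segment ℝ a b, this⟩
      simp [h] at this
    obtain ⟨x, _, hxi, hxc⟩ := hconn (interior K) (closure K)ᶜ isOpen_interior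
      isClosed_closure.isOpen_compl h1 ⟨a, ha'⟩ ⟨b, hb'⟩
    exact hxc (interior_subset_closure hxi)
  obtain ⟨w, hwseg, hwf⟩ := hne
  refine ⟨w, hwf, ?_⟩
  have := dist_add_dist_of_mem_segment hwseg
  linarith [dist_nonneg (x := w) (y := b)]

lemma mem_epsBdry_of_frontier {d : ℕ} {K : Set (Euc d)} {z w : Euc d} {ε : ℝ}
    (hw : w ∈ frontier K) (hd : dist z w ≤ ε) : z ∈ epsBdry K ε := by
  refine ⟨w, hw, z - w, ?_, add_sub_cancel w z⟩
  simpa [dist_eq_norm, norm_sub_rev] using hd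

/-- For a nonempty compact `K ⊆ ℝ^d` and points `x₁, y₁, x₂, y₂`,
`|1_K(y₁ − x₁) − 1_K(y₂ − x₂)| ≤ 1_{∂^{2|x₁−x₂|}K}(y₁ − x₁) + 1_{∂^{2|y₁−y₂|}K}(y₁ − x₁)`. -/
theorem indicator_diff_le_boundary_indicators
    {d : ℕ} (K : Set (Euc d)) (hK : IsCompact K) (hKne : K.Nonempty)
    (x₁ y₁ x₂ y₂ : Euc d) :
    |K.indicator (fun _ => (1 : ℝ)) (y₁ - x₁) - K.indicator (fun _ => (1 : ℝ)) (y₂ - x₂)| ≤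
      (epsBdry K (2 * ‖x₁ - x₂‖)).indicator (fun _ => (1 : ℝ)) (y₁ - x₁) +
      (epsBdry K (2 * ‖y₁ - y₂‖)).indicator (fun _ => (1 : ℝ)) (y₁ - x₁) := by
  set z₁ := y₁ - x₁
  set z₂ := y₂ - x₂
  have hzz : dist z₁ z₂ ≤ ‖x₁ - x₂‖ + ‖y₁ - y₂‖ := by
    have : z₁ - z₂ = (y₁ - y₂) - (x₁ - x₂) := by simp only [z₁, z₂]; abel
    rw [dist_eq_norm, this]
    calc ‖(y₁ - y₂) - (x₁ - x₂)‖ ≤ ‖y₁ - y₂‖ + ‖x₁ - x₂‖ := norm_sub_le _ _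
    _ = ‖x₁ - x₂‖ + ‖y₁ - y₂‖ := by ring
  -- if indicators agree, LHS = 0
  rcases em ((z₁ ∈ K) ↔ (z₂ ∈ K)) with hiff | hiff
  · have : K.indicator (fun _ => (1 : ℝ)) z₁ = K.indicator (fun _ => (1 : ℝ)) z₂ := by
      rcases em (z₁ ∈ K) with h | h
      · rw [indicator_of_mem h, indicator_of_mem (hiff.mp h)]
      · rw [indicator_of_notMem h, indicator_of_notMem (fun h2 => h (hiff.mpr h2))]
    rw [this, sub_self, abs_zero]
    exact add_nonneg (Set.indicator_nonneg (fun _ _ => zero_le_one) _)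
      (Set.indicator_nonneg (fun _ _ => zero_le_one) _)
  · -- mixed case: find frontier point w with dist z₁ w ≤ dist z₁ z₂
    have hw : ∃ w ∈ frontier K, dist z₁ w ≤ dist z₁ z₂ := by
      rcases em (z₁ ∈ K) with h1 | h1
      · have h2 : z₂ ∉ K := fun h => hiff ⟨fun _ => h, fun _ => h1⟩
        exact exists_frontier_dist_le K h1 h2
      · have h2 : z₂ ∈ K := by
          by_contra h2
          exact hiff ⟨fun h => absurd h h1, fun h => absurd h h2⟩
        obtain ⟨w, hwf, hd⟩ := exists_frontier_dist_le Kᶜ (h1 : z₁ ∈ Kᶜ)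
          (by simpa using h2)
        rw [frontier_compl] at hwf
        exact ⟨w, hwf, hd⟩
    obtain ⟨w, hwf, hd⟩ := hw
    have habs : |K.indicator (fun _ => (1 : ℝ)) z₁ - K.indicator (fun _ => (1 : ℝ)) z₂| ≤ 1 := by
      rcases em (z₁ ∈ K) with h | h <;> rcases em (z₂ ∈ K) with h' | h' <;>
        simp [indicator_of_mem, indicator_of_notMem, *]
    rcases le_total ‖x₁ - x₂‖ ‖y₁ - y₂‖ with hc | hc
    · have hz : z₁ ∈ epsBdry K (2 * ‖y₁ - y₂‖) :=
        mem_epsBdry_of_frontier hwf (by linarith)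
      rw [indicator_of_mem hz]
      have : (0:ℝ) ≤ (epsBdry K (2 * ‖x₁ - x₂‖)).indicator (fun _ => (1 : ℝ)) z₁ :=
        Set.indicator_nonneg (fun _ _ => zero_le_one) _
      linarith
    · have hz : z₁ ∈ epsBdry K (2 * ‖x₁ - x₂‖) :=
        mem_epsBdry_of_frontier hwf (by linarith)
      rw [indicator_of_mem hz]
      have : (0:ℝ) ≤ (epsBdry K (2 * ‖y₁ - y₂‖)).indicator (fun _ => (1 : ℝ)) z₁ :=
        Set.indicator_nonneg (fun _ _ => zero_le_one) _
      linarith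
end
end

section
/- Let K ⊆ ℝ^d be a nonempty compact set, ε > 0, and φ_ε a mollifier at scale ε. For all x₁, y₁, x₂, y₂ ∈ ℝ^d one has |1_K^ε(y₁ − x₁) − 1_K^ε(y₂ − x₂)| ≤ 1^ε_{∂^{2|x₁−x₂|}K}(y₁ − x₁) + 1^ε_{∂^{2|y₁−y₂|}K}(y₁ − x₁), where 1^ε_A denotes the mollified indicator of the set A (with the same mollifier φ_ε). -/
open MeasureTheory Metric Set Pointwise

noncomputable section

/-- The mollified indicator `1_A^φ(x) = ∫ 1_A(x − y) φ(y) dy`. -/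
def mollInd {d : ℕ} (φ : Euc d → ℝ) (A : Set (Euc d)) (x : Euc d) : ℝ :=
  ∫ y, A.indicator (fun _ => (1 : ℝ)) (x - y) * φ y

lemma segment_meets_frontier {d : ℕ} {K : Set (Euc d)} (hKc : IsClosed K)
    {a b : Euc d} (ha : a ∈ K) (hb : b ∉ K) :
    ∃ z ∈ segment ℝ a b, z ∈ frontier K := by
  by_contra h
  push_neg at h
  have hsub : segment ℝ a b ⊆ interior K ∪ Kᶜ := by
    intro x hx
    by_cases hxK : x ∈ K
    · left
      have hfr := h x hx
      rw [frontier, hKc.closure_eq] at hfr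
      simp only [mem_diff, not_and, not_not] at hfr
      exact hfr hxK
    · exact Or.inr hxK
  have hpre : IsPreconnected (segment ℝ a b) := (convex_segment a b).isPreconnected
  have hdisj : Disjoint (interior K) Kᶜ :=
    (disjoint_compl_right (a := K)).mono_left interior_subset
  rcases hpre.subset_or_subset isOpen_interior hKc.isOpen_compl hdisj hsub with h1 | h2
  · exact hb (interior_subset (h1 (right_mem_segment ℝ a b)))
  · exact (h2 (left_mem_segment ℝ a b)) ha

/-- Pointwise key estimate. -/
lemma indicator_diff_le {d : ℕ} {K : Set (Euc d)} (hKc : IsClosed K)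
    {a b : Euc d} {r : ℝ} (h : ‖a - b‖ ≤ r) :
    |K.indicator (fun _ => (1 : ℝ)) a - K.indicator (fun _ => (1 : ℝ)) b| ≤
      (epsBdry K r).indicator (fun _ => (1 : ℝ)) a := by
  have key : ∀ c : Euc d, c ∈ K → ∀ c' : Euc d, c' ∉ K → ‖c - c'‖ ≤ r →
      c ∈ epsBdry K r ∧ c' ∈ epsBdry K r := by
    intro c hc c' hc' hcc'
    obtain ⟨z, hzseg, hzfr⟩ := segment_meets_frontier hKc hc hc'
    have hd : dist c z + dist z c' = dist c c' := dist_add_dist_of_mem_segment hzseg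
    have h1 : dist z c' ≥ 0 := dist_nonneg
    have h2 : dist c z ≥ 0 := dist_nonneg
    rw [← dist_eq_norm] at hcc'
    constructor
    · have hcz : ‖c - z‖ ≤ r := by rw [← dist_eq_norm]; linarith
      have hm : c - z ∈ Metric.closedBall (0 : Euc d) r := by
        simpa [mem_closedBall_zero_iff] using hcz
      have : z + (c - z) ∈ epsBdry K r := Set.add_mem_add hzfr hm
      simpa using this
    · have hcz : ‖c' - z‖ ≤ r := by rw [← dist_eq_norm, dist_comm]; linarith
      have hm : c' - z ∈ Metric.closedBall (0 : Euc d) r := by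
        simpa [mem_closedBall_zero_iff] using hcz
      have : z + (c' - z) ∈ epsBdry K r := Set.add_mem_add hzfr hm
      simpa using this
  by_cases haK : a ∈ K <;> by_cases hbK : b ∈ K
  · simp [Set.indicator_of_mem, haK, hbK]
    exact Set.indicator_nonneg (fun _ _ => zero_le_one) _
  · have hmem : a ∈ epsBdry K r := (key a haK b hbK h).1
    simp [Set.indicator_of_mem, Set.indicator_of_notMem, haK, hbK, hmem]
  · have h' : ‖b - a‖ ≤ r := by rwa [norm_sub_rev]
    have hmem : a ∈ epsBdry K r := (key b hbK a haK h').2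
    simp [Set.indicator_of_mem, Set.indicator_of_notMem, haK, hbK, hmem]
  · simp [Set.indicator_of_notMem, haK, hbK]
    exact Set.indicator_nonneg (fun _ _ => zero_le_one) _


lemma integrable_moll {d : ℕ} {A : Set (Euc d)} (hA : MeasurableSet A) (a : Euc d)
    {φ : Euc d → ℝ} (hφint : Integrable φ) :
    Integrable (fun y => A.indicator (fun _ => (1 : ℝ)) (a - y) * φ y) := by
  apply hφint.bdd_mul (c := 1)
  · exact ((measurable_one.indicator hA).comp (measurable_const.sub measurable_id)).aestronglyMeasurable
  · refine Filter.Eventually.of_forall (fun y => ?_)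
    rw [Real.norm_eq_abs]
    by_cases h : a - y ∈ A <;> simp [Set.indicator_of_mem, Set.indicator_of_notMem, h]

/-- If `φε` is a mollifier at scale `ε`, then for a nonempty compact `K` and all
`x₁, y₁, x₂, y₂`,
`|1_K^ε(y₁ − x₁) − 1_K^ε(y₂ − x₂)| ≤ 1^ε_{∂^{2|x₁−x₂|}K}(y₁ − x₁) + 1^ε_{∂^{2|y₁−y₂|}K}(y₁ − x₁)`. -/
theorem mollified_indicator_diff_le_boundary_mollified_indicators
    {d : ℕ} (K : Set (Euc d)) (hK : IsCompact K) (hKne : K.Nonempty)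
    (ε : ℝ) (hε : 0 < ε) (φε : Euc d → ℝ)
    (hφ0 : ∀ x, 0 ≤ φε x) (hφint : Integrable φε) (hφ1 : ∫ x, φε x = 1)
    (hφsupp : Function.support φε ⊆ Metric.closedBall 0 ε)
    (x₁ y₁ x₂ y₂ : Euc d) :
    |mollInd φε K (y₁ - x₁) - mollInd φε K (y₂ - x₂)| ≤
      mollInd φε (epsBdry K (2 * ‖x₁ - x₂‖)) (y₁ - x₁) +
      mollInd φε (epsBdry K (2 * ‖y₁ - y₂‖)) (y₁ - x₁) := by
  set a := y₁ - x₁ with ha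
  set b := y₂ - x₂ with hb
  set r₁ := 2 * ‖x₁ - x₂‖ with hr₁
  set r₂ := 2 * ‖y₁ - y₂‖ with hr₂
  have hKc : IsClosed K := hK.isClosed
  have hfrc : IsCompact (frontier K) :=
    hK.of_isClosed_subset isClosed_frontier (by rw [frontier, hKc.closure_eq]; exact diff_subset)
  have hBc : ∀ r : ℝ, MeasurableSet (epsBdry K r) := fun r =>
    ((hfrc.add (isCompact_closedBall 0 r)).isClosed).measurableSet
  have hKm : MeasurableSet K := hKc.measurableSet
  -- norm bound
  have hab : ‖a - b‖ ≤ max r₁ r₂ := by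
    have h1 : a - b = (y₁ - y₂) - (x₁ - x₂) := by rw [ha, hb]; abel
    have h2 : ‖a - b‖ ≤ ‖y₁ - y₂‖ + ‖x₁ - x₂‖ := h1 ▸ norm_sub_le _ _
    rcases max_cases r₁ r₂ with ⟨hm, hle⟩ | ⟨hm, hle⟩ <;> rw [hm] <;>
      [skip; skip] <;> rw [hr₁, hr₂] at * <;> linarith
  -- pointwise bound
  have hpt : ∀ y : Euc d,
      |K.indicator (fun _ => (1:ℝ)) (a - y) * φε y - K.indicator (fun _ => (1:ℝ)) (b - y) * φε y|
      ≤ (epsBdry K r₁).indicator (fun _ => (1:ℝ)) (a - y) * φε y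
        + (epsBdry K r₂).indicator (fun _ => (1:ℝ)) (a - y) * φε y := by
    intro y
    rw [← sub_mul, abs_mul, abs_of_nonneg (hφ0 y), ← add_mul]
    apply mul_le_mul_of_nonneg_right _ (hφ0 y)
    have hdiff : ‖(a - y) - (b - y)‖ ≤ max r₁ r₂ := by
      simpa [sub_sub_sub_cancel_right] using hab
    have hnn₁ : (0:ℝ) ≤ (epsBdry K r₁).indicator (fun _ => (1:ℝ)) (a - y) :=
      Set.indicator_nonneg (fun _ _ => zero_le_one) _
    have hnn₂ : (0:ℝ) ≤ (epsBdry K r₂).indicator (fun _ => (1:ℝ)) (a - y) :=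
      Set.indicator_nonneg (fun _ _ => zero_le_one) _
    rcases max_cases r₁ r₂ with ⟨hm, _⟩ | ⟨hm, _⟩
    · rw [hm] at hdiff
      have := indicator_diff_le hKc hdiff
      linarith
    · rw [hm] at hdiff
      have := indicator_diff_le hKc hdiff
      linarith
  have hIa := integrable_moll hKm a hφint
  have hIb := integrable_moll hKm b hφint
  have hI₁ := integrable_moll (hBc r₁) a hφint
  have hI₂ := integrable_moll (hBc r₂) a hφint
  calc |mollInd φε K a - mollInd φε K b|
      = |∫ y, (K.indicator (fun _ => (1:ℝ)) (a - y) * φε y -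
            K.indicator (fun _ => (1:ℝ)) (b - y) * φε y)| := by
        rw [mollInd, mollInd, integral_sub hIa hIb]
    _ ≤ ∫ y, |K.indicator (fun _ => (1:ℝ)) (a - y) * φε y -
            K.indicator (fun _ => (1:ℝ)) (b - y) * φε y| :=
        by simpa [Real.norm_eq_abs] using
          norm_integral_le_integral_norm (fun y => K.indicator (fun _ => (1:ℝ)) (a - y) * φε y -
            K.indicator (fun _ => (1:ℝ)) (b - y) * φε y)
    _ ≤ ∫ y, ((epsBdry K r₁).indicator (fun _ => (1:ℝ)) (a - y) * φε y
        + (epsBdry K r₂).indicator (fun _ => (1:ℝ)) (a - y) * φε y) := by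
        exact integral_mono (hIa.sub hIb).abs (hI₁.add hI₂) hpt
    _ = mollInd φε (epsBdry K r₁) a + mollInd φε (epsBdry K r₂) a := by
        rw [mollInd, mollInd, integral_add hI₁ hI₂]
end
end

section
/- Suppose the set-valued map K satisfies (H1)–(H2) with constant C₀ > 0, compact set 𝒦 and generalized boundary Θ, and let w : ℝ^d → ℝ^d be any map. Let ε > 0 and 0 < η ≤ 1, let φ_ε and φ_η be mollifiers at scales ε and η respectively, and define the doubly mollified indicator 1^{ε,η}_{K(x')}(x) := ∫∫ 1_{K(x'−y')}(x−y) φ_ε(y) φ_η(y') dy dy'. Then there exists a constant C > 0, depending only on C₀ and independent of ε, η, x, such that for every x ∈ ℝ^d, ∫_{ℝ^d} |1^{ε,η}_{K(w(x))}(y − x) − 1^ε_{K(w(x))}(y − x)| dy ≤ C η. -/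
open MeasureTheory Metric Set Pointwise

noncomputable section

/-- The `ε`-enlargement `A^{ε,+} = A ∪ ∂^ε A`. -/
def enl {d : ℕ} (A : Set (Euc d)) (ε : ℝ) : Set (Euc d) := A ∪ epsBdry A ε

/-- Assumptions (H1)-(H2) on the set-valued map `K` with constant `C₀`, enveloping
compact set `𝒦`, and generalized boundary `Θ`. -/
structure HypK {d : ℕ} (K Θ : Euc d → Set (Euc d)) (C₀ : ℝ) (𝒦 : Set (Euc d)) : Prop where
  compact_env : IsCompact 𝒦
  compact : ∀ x, IsCompact (K x)
  nonempty : ∀ x, (K x).Nonempty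
  subset_env : ∀ x, K x ⊆ 𝒦
  closed_Θ : ∀ x, IsClosed (Θ x)
  h2i : ∀ x, frontier (K x) ⊆ Θ x
  h2ii : ∀ x, ∀ ε : ℝ, 0 < ε → ε < 1 → volume (enl (Θ x) ε) ≤ ENNReal.ofReal (C₀ * ε)
  h2iii : ∀ x x', symmDiff (K x) (K x') ⊆ enl (Θ x) (C₀ * ‖x - x'‖)
  h2iv : ∀ x x', Θ x ⊆ enl (Θ x') (C₀ * ‖x - x'‖)

/-- The doubly mollified indicator
`1^{ε,η}_{K(x')}(x) = ∫∫ 1_{K(x'−y')}(x−y) φε(y) φη(y') dy dy'`. -/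
def mollInd2 {d : ℕ} (φε φη : Euc d → ℝ) (K : Euc d → Set (Euc d)) (x' x : Euc d) : ℝ :=
  ∫ y', (∫ y, (K (x' - y')).indicator (fun _ => (1 : ℝ)) (x - y) * φε y) * φη y'

open ENNReal

/-! ### Auxiliary lemmas -/

lemma exists_nice_mollifier {d : ℕ} {ρ : ℝ} {φ : Euc d → ℝ}
    (h0 : ∀ x, 0 ≤ φ x) (hi : Integrable φ)
    (hs : Function.support φ ⊆ Metric.closedBall 0 ρ) :
    ∃ ψ : Euc d → ℝ, StronglyMeasurable ψ ∧ ψ =ᵐ[volume] φ ∧ (∀ x, 0 ≤ ψ x) ∧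
      Integrable ψ ∧ (∫ x, ψ x) = (∫ x, φ x) ∧
      Function.support ψ ⊆ Metric.closedBall 0 ρ := by
  obtain ⟨ψ0, hm0, heq0⟩ := hi.aestronglyMeasurable
  set ψ : Euc d → ℝ := (Metric.closedBall (0 : Euc d) ρ).indicator (fun x => max (ψ0 x) 0)
    with hψdef
  have hm : StronglyMeasurable ψ :=
    ((hm0.measurable.max measurable_const).indicator measurableSet_closedBall).stronglyMeasurable
  have heq : ψ =ᵐ[volume] φ := by
    filter_upwards [heq0] with y hy
    by_cases hmem : y ∈ Metric.closedBall (0 : Euc d) ρ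
    · simp only [hψdef, Set.indicator_of_mem hmem]
      rw [← hy, max_eq_left (h0 y)]
    · simp only [hψdef, Set.indicator_of_notMem hmem]
      by_contra h
      exact hmem (hs (Function.mem_support.2 fun h' => h h'.symm))
  refine ⟨ψ, hm, heq, fun x => ?_, hi.congr heq.symm, integral_congr_ae heq, fun x hx => ?_⟩
  · by_cases hmem : x ∈ Metric.closedBall (0 : Euc d) ρ
    · simp [hψdef, Set.indicator_of_mem hmem]
    · simp [hψdef, Set.indicator_of_notMem hmem]
  · by_contra h
    exact hx (by simp [hψdef, Set.indicator_of_notMem h])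

lemma indMul_integrable {d : ℕ} {ψ : Euc d → ℝ} (hm : StronglyMeasurable ψ)
    (h0 : ∀ x, 0 ≤ ψ x) (hi : Integrable ψ) {A : Set (Euc d)} (hA : MeasurableSet A)
    (z : Euc d) :
    Integrable fun y => A.indicator (fun _ => (1 : ℝ)) (z - y) * ψ y := by
  refine hi.mono ?_ (ae_of_all _ fun y => ?_)
  · exact (((measurable_const.indicator hA).comp
      (measurable_const.sub measurable_id)).mul hm.measurable).aestronglyMeasurable
  · rw [Real.norm_eq_abs, Real.norm_eq_abs, abs_mul]
    have h1 : |A.indicator (fun _ => (1:ℝ)) (z - y)| ≤ 1 := by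
      by_cases h : z - y ∈ A <;> simp [Set.indicator_apply, h]
    calc |A.indicator (fun _ => (1:ℝ)) (z - y)| * |ψ y| ≤ 1 * |ψ y| :=
          mul_le_mul_of_nonneg_right h1 (abs_nonneg _)
      _ = |ψ y| := one_mul _

lemma mollInd_nonneg {d : ℕ} {ψ : Euc d → ℝ} (h0 : ∀ x, 0 ≤ ψ x) (A : Set (Euc d))
    (z : Euc d) : 0 ≤ mollInd ψ A z :=
  integral_nonneg fun y => mul_nonneg (Set.indicator_nonneg (fun _ _ => zero_le_one) _) (h0 y)

lemma mollInd_le_one {d : ℕ} {ψ : Euc d → ℝ} (hm : StronglyMeasurable ψ)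
    (h0 : ∀ x, 0 ≤ ψ x) (hi : Integrable ψ) (h1 : (∫ x, ψ x) = 1)
    {A : Set (Euc d)} (hA : MeasurableSet A) (z : Euc d) : mollInd ψ A z ≤ 1 := by
  rw [mollInd]
  conv_rhs => rw [← h1]
  refine integral_mono (indMul_integrable hm h0 hi hA z) hi fun y => ?_
  have h2 : A.indicator (fun _ => (1:ℝ)) (z - y) ≤ 1 := by
    by_cases h : z - y ∈ A <;> simp [Set.indicator_apply, h]
  calc A.indicator (fun _ => (1:ℝ)) (z - y) * ψ y ≤ 1 * ψ y :=
        mul_le_mul_of_nonneg_right h2 (h0 y)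
    _ = ψ y := one_mul _

lemma mollInd_sub_abs_le {d : ℕ} {ψ : Euc d → ℝ} (hm : StronglyMeasurable ψ)
    (h0 : ∀ x, 0 ≤ ψ x) (hi : Integrable ψ) {A B : Set (Euc d)}
    (hA : MeasurableSet A) (hB : MeasurableSet B) (z : Euc d) :
    |mollInd ψ B z - mollInd ψ A z| ≤
      ∫ y, (symmDiff B A).indicator (fun _ => (1:ℝ)) (z - y) * ψ y := by
  have hiA := indMul_integrable hm h0 hi hA z
  have hiB := indMul_integrable hm h0 hi hB z
  have hiS := indMul_integrable hm h0 hi (hB.symmDiff hA) z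
  rw [mollInd, mollInd, ← integral_sub hiB hiA]
  have habs := norm_integral_le_integral_norm (μ := volume)
    (fun y => B.indicator (fun _ => (1:ℝ)) (z - y) * ψ y
      - A.indicator (fun _ => (1:ℝ)) (z - y) * ψ y)
  simp only [Real.norm_eq_abs] at habs
  refine habs.trans (integral_mono (hiB.sub hiA).abs hiS fun y => ?_)
  by_cases hB' : z - y ∈ B <;> by_cases hA' : z - y ∈ A <;>
    simp [Set.indicator_apply, hA', hB', Set.mem_symmDiff, abs_of_nonneg (h0 y), h0 y]

lemma mollInd_stronglyMeasurable {d : ℕ} {ψ : Euc d → ℝ} (hm : StronglyMeasurable ψ)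
    {A : Set (Euc d)} (hA : MeasurableSet A) :
    StronglyMeasurable fun z => mollInd ψ A z := by
  have hj : StronglyMeasurable (Function.uncurry fun z y : Euc d =>
      A.indicator (fun _ => (1:ℝ)) (z - y) * ψ y) :=
    (((measurable_const.indicator hA).comp (measurable_fst.sub measurable_snd)).mul
      (hm.measurable.comp measurable_snd)).stronglyMeasurable
  exact hj.integral_prod_right

lemma lintegral_mollInd_le {d : ℕ} {ψ : Euc d → ℝ} (hm : StronglyMeasurable ψ)
    (h0 : ∀ x, 0 ≤ ψ x) (hi : Integrable ψ) (h1 : (∫ x, ψ x) = 1)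
    {S : Set (Euc d)} (hS : MeasurableSet S) :
    ∫⁻ z, ENNReal.ofReal (∫ y, S.indicator (fun _ => (1:ℝ)) (z - y) * ψ y) ≤ volume S := by
  have hmeasR : Measurable fun p : Euc d × Euc d =>
      S.indicator (fun _ => (1:ℝ)) (p.1 - p.2) * ψ p.2 :=
    ((measurable_const.indicator hS).comp (measurable_fst.sub measurable_snd)).mul
      (hm.measurable.comp measurable_snd)
  have step1 : ∀ z, ENNReal.ofReal (∫ y, S.indicator (fun _ => (1:ℝ)) (z - y) * ψ y)
      ≤ ∫⁻ y, ENNReal.ofReal (S.indicator (fun _ => (1:ℝ)) (z - y) * ψ y) := by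
    intro z
    have hae : AEStronglyMeasurable (fun y => S.indicator (fun _ => (1:ℝ)) (z - y) * ψ y)
        volume :=
      (((measurable_const.indicator hS).comp (measurable_const.sub measurable_id)).mul
        hm.measurable).aestronglyMeasurable
    rw [integral_eq_lintegral_of_nonneg_ae
      (ae_of_all _ fun y => mul_nonneg (Set.indicator_nonneg (fun _ _ => zero_le_one) _) (h0 y))
      hae]
    exact ENNReal.ofReal_toReal_le
  calc ∫⁻ z, ENNReal.ofReal (∫ y, S.indicator (fun _ => (1:ℝ)) (z - y) * ψ y)
      ≤ ∫⁻ z, ∫⁻ y, ENNReal.ofReal (S.indicator (fun _ => (1:ℝ)) (z - y) * ψ y) :=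
        lintegral_mono step1
    _ = ∫⁻ y, ∫⁻ z, ENNReal.ofReal (S.indicator (fun _ => (1:ℝ)) (z - y) * ψ y) :=
        lintegral_lintegral_swap hmeasR.ennreal_ofReal.aemeasurable
    _ ≤ volume S := by
        have key : ∀ y : Euc d, ∫⁻ z, ENNReal.ofReal (S.indicator (fun _ => (1:ℝ)) (z - y) * ψ y)
            = volume S * ENNReal.ofReal (ψ y) := by
          intro y
          have e1 : ∀ z : Euc d, ENNReal.ofReal (S.indicator (fun _ => (1:ℝ)) (z - y) * ψ y)
              = ((fun z : Euc d => z - y) ⁻¹' S).indicator (fun _ => (1:ℝ≥0∞)) z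
                * ENNReal.ofReal (ψ y) := by
            intro z
            by_cases h : z - y ∈ S <;>
              simp [Set.indicator_apply, h, Set.mem_preimage, ENNReal.ofReal_mul, zero_le_one]
          have hT : MeasurableSet ((fun z : Euc d => z - y) ⁻¹' S) :=
            hS.preimage (measurable_id.sub measurable_const)
          simp only [e1]
          rw [lintegral_mul_const _ (measurable_const.indicator hT),
            lintegral_indicator hT, setLIntegral_one,
            (measurePreserving_sub_right volume y).measure_preimage hS.nullMeasurableSet]
        simp only [key]
        rw [lintegral_const_mul _ hm.measurable.ennreal_ofReal]
        rw [← ofReal_integral_eq_lintegral_ofReal hi (ae_of_all _ h0), h1]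
        simp

lemma enl_mono {d : ℕ} (A : Set (Euc d)) {r s : ℝ} (h : r ≤ s) : enl A r ⊆ enl A s :=
  Set.union_subset_union_right _
    (Set.add_subset_add_left (Metric.closedBall_subset_closedBall h))

lemma vol_symmDiff {d : ℕ} {K Θ : Euc d → Set (Euc d)} {C₀ : ℝ} (hC₀ : 0 < C₀)
    {𝒦 : Set (Euc d)} (hyp : HypK K Θ C₀ 𝒦) (a b : Euc d) {r : ℝ}
    (hab : ‖a - b‖ ≤ r) (hr : 0 < r) (hr1 : r ≤ 1) :
    volume (symmDiff (K a) (K b)) ≤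
      ENNReal.ofReal ((C₀ * C₀ + C₀ * (volume 𝒦).toReal + 1) * r) := by
  have hM : 0 ≤ (volume 𝒦).toReal := ENNReal.toReal_nonneg
  have hsub : symmDiff (K a) (K b) ⊆ enl (Θ a) (C₀ * r) :=
    (hyp.h2iii a b).trans (enl_mono _ (mul_le_mul_of_nonneg_left hab hC₀.le))
  by_cases hc : C₀ * r < 1
  · calc volume (symmDiff (K a) (K b)) ≤ volume (enl (Θ a) (C₀ * r)) := measure_mono hsub
      _ ≤ ENNReal.ofReal (C₀ * (C₀ * r)) := hyp.h2ii a _ (mul_pos hC₀ hr) hc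
      _ ≤ ENNReal.ofReal ((C₀ * C₀ + C₀ * (volume 𝒦).toReal + 1) * r) := by
          apply ENNReal.ofReal_le_ofReal
          nlinarith [mul_nonneg (mul_nonneg hC₀.le hM) hr.le]
  · push_neg at hc
    calc volume (symmDiff (K a) (K b)) ≤ volume 𝒦 := by
          refine measure_mono (subset_trans symmDiff_subset_union ?_)
          exact Set.union_subset (hyp.subset_env a) (hyp.subset_env b)
      _ = ENNReal.ofReal ((volume 𝒦).toReal) :=
          (ENNReal.ofReal_toReal hyp.compact_env.measure_lt_top.ne).symm
      _ ≤ ENNReal.ofReal ((C₀ * C₀ + C₀ * (volume 𝒦).toReal + 1) * r) := by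
          apply ENNReal.ofReal_le_ofReal
          nlinarith [mul_nonneg (mul_nonneg hC₀.le hM) hr.le, mul_pos hC₀ hr,
            mul_nonneg (mul_nonneg hC₀.le hC₀.le) hr.le, mul_le_mul_of_nonneg_left hc hM]

lemma mollInd_cont {d : ℕ} {K Θ : Euc d → Set (Euc d)} {C₀ : ℝ} (hC₀ : 0 < C₀)
    {𝒦 : Set (Euc d)} (hyp : HypK K Θ C₀ 𝒦) {ψ : Euc d → ℝ} (hm : StronglyMeasurable ψ)
    (h0 : ∀ x, 0 ≤ ψ x) (hi : Integrable ψ) (x' z : Euc d) :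
    Continuous fun y' => mollInd ψ (K (x' - y')) z := by
  have hKm : ∀ a, MeasurableSet (K a) := fun a => (hyp.compact a).isClosed.measurableSet
  set C : ℝ := C₀ * C₀ + C₀ * (volume 𝒦).toReal + 1 with hCdef
  have hCpos : 0 < C := by nlinarith [ENNReal.toReal_nonneg (a := volume 𝒦)]
  rw [Metric.continuous_iff]
  intro y'₀ r hr
  have hfin : (∫⁻ y, ENNReal.ofReal (ψ y)) ≠ ⊤ := by
    rw [← ofReal_integral_eq_lintegral_ofReal hi (ae_of_all _ h0)]
    exact ENNReal.ofReal_ne_top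
  obtain ⟨δ, hδ0, hδ⟩ := exists_pos_setLIntegral_lt_of_measure_lt hfin
    (ENNReal.ofReal_pos.mpr hr).ne'
  set δ' : ℝ≥0∞ := min δ 1 with hδ'def
  have hδ'0 : 0 < δ' := lt_min hδ0 one_pos
  have hδ't : δ' ≠ ⊤ := ((min_le_right _ _).trans_lt (by norm_num)).ne
  have htδ : 0 < δ'.toReal := ENNReal.toReal_pos hδ'0.ne' hδ't
  set ρ : ℝ := min 1 (δ'.toReal / (2 * C)) with hρdef
  have hρ0 : 0 < ρ := lt_min one_pos (by positivity)
  refine ⟨ρ, hρ0, fun y' hdist => ?_⟩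
  by_cases hy : y' = y'₀
  · simp [hy, hr]
  · have hnorm : 0 < ‖y' - y'₀‖ := norm_pos_iff.mpr (sub_ne_zero.mpr hy)
    have hdist' : ‖y' - y'₀‖ < ρ := by rwa [dist_eq_norm] at hdist
    set S : Set (Euc d) := symmDiff (K (x' - y')) (K (x' - y'₀)) with hSdef
    have hS : MeasurableSet S := (hKm _).symmDiff (hKm _)
    have hsd : volume S ≤ ENNReal.ofReal (C * ‖y' - y'₀‖) := by
      have he : ‖(x' - y') - (x' - y'₀)‖ = ‖y' - y'₀‖ := by
        rw [show (x' - y') - (x' - y'₀) = y'₀ - y' by abel, norm_sub_rev]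
      exact vol_symmDiff hC₀ hyp _ _ he.le hnorm (hdist'.le.trans (min_le_left _ _))
    have hsmall : ENNReal.ofReal (C * ‖y' - y'₀‖) < δ := by
      have h1 : C * ‖y' - y'₀‖ < δ'.toReal := by
        have h2 : C * ‖y' - y'₀‖ < C * ρ := mul_lt_mul_of_pos_left hdist' hCpos
        have h3 : C * ρ ≤ δ'.toReal / 2 := by
          calc C * ρ ≤ C * (δ'.toReal / (2 * C)) :=
                mul_le_mul_of_nonneg_left (min_le_right _ _) hCpos.le
            _ = δ'.toReal / 2 := by field_simp
        exact (h2.trans_le h3).trans (half_lt_self htδ)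
      calc ENNReal.ofReal (C * ‖y' - y'₀‖) < ENNReal.ofReal δ'.toReal :=
            (ENNReal.ofReal_lt_ofReal_iff htδ).mpr h1
        _ = δ' := ENNReal.ofReal_toReal hδ't
        _ ≤ δ := min_le_left _ _
    set T : Set (Euc d) := (fun y => z - y) ⁻¹' S with hTdef
    have hTm : MeasurableSet T := hS.preimage (measurable_const.sub measurable_id)
    have hvolT : volume T = volume S := by
      have h1 : T = (fun y : Euc d => -y) ⁻¹' ((fun u : Euc d => z + u) ⁻¹' S) := by
        ext y; simp [hTdef, Set.mem_preimage, sub_eq_add_neg]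
      rw [h1, Measure.measure_preimage_neg, measure_preimage_add]
    have key : dist (mollInd ψ (K (x' - y')) z) (mollInd ψ (K (x' - y'₀)) z) ≤ ∫ y in T, ψ y := by
      rw [Real.dist_eq]
      refine (mollInd_sub_abs_le hm h0 hi (hKm _) (hKm _) z).trans ?_
      have he : ∀ y, S.indicator (fun _ => (1:ℝ)) (z - y) * ψ y = T.indicator ψ y := by
        intro y
        by_cases h : z - y ∈ S <;>
          simp [Set.indicator_apply, hTdef, Set.mem_preimage, h]
      simp only [← hSdef, he]
      rw [integral_indicator hTm]
    have heq2 : ∫ y in T, ψ y = (∫⁻ y in T, ENNReal.ofReal (ψ y)).toReal :=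
      integral_eq_lintegral_of_nonneg_ae (ae_of_all _ h0) hm.aestronglyMeasurable.restrict
    have hlt : (∫⁻ y in T, ENNReal.ofReal (ψ y)) < ENNReal.ofReal r :=
      hδ T (by rw [hvolT]; exact lt_of_le_of_lt hsd hsmall)
    calc dist (mollInd ψ (K (x' - y')) z) (mollInd ψ (K (x' - y'₀)) z)
        ≤ ∫ y in T, ψ y := key
      _ = (∫⁻ y in T, ENNReal.ofReal (ψ y)).toReal := heq2
      _ < r := by
          rw [← ENNReal.toReal_ofReal hr.le]
          exact ENNReal.toReal_strict_mono ENNReal.ofReal_ne_top hlt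

/-- Under (H1)-(H2), there is a constant `C > 0` depending only on the data of the
hypotheses (in particular independent of `ε`, `η` and `x`) such that for mollifiers
`φε, φη` at scales `ε > 0` and `0 < η ≤ 1`,
`∫ |1^{ε,η}_{K(w(x))}(y − x) − 1^ε_{K(w(x))}(y − x)| dy ≤ C η` for every `x`. -/
theorem integral_abs_doubly_mollified_sub_mollified_le
    {d : ℕ} (K Θ : Euc d → Set (Euc d)) (C₀ : ℝ) (hC₀ : 0 < C₀) (𝒦 : Set (Euc d))
    (hyp : HypK K Θ C₀ 𝒦) (w : Euc d → Euc d) :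
    ∃ C > 0, ∀ (ε η : ℝ), 0 < ε → 0 < η → η ≤ 1 →
      ∀ (φε φη : Euc d → ℝ),
        (∀ x, 0 ≤ φε x) → Integrable φε → (∫ x, φε x) = 1 →
        Function.support φε ⊆ Metric.closedBall 0 ε →
        (∀ x, 0 ≤ φη x) → Integrable φη → (∫ x, φη x) = 1 →
        Function.support φη ⊆ Metric.closedBall 0 η →
        ∀ x : Euc d,
          ∫ y, |mollInd2 φε φη K (w x) (y - x) - mollInd φε (K (w x)) (y - x)| ≤ C * η := by
  have hM0 : 0 ≤ (volume 𝒦).toReal := ENNReal.toReal_nonneg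
  refine ⟨C₀ * C₀ + C₀ * (volume 𝒦).toReal + 1, by nlinarith, ?_⟩
  set C : ℝ := C₀ * C₀ + C₀ * (volume 𝒦).toReal + 1 with hCdef
  have hCpos : 0 < C := by nlinarith
  intro ε η hε hη hη1 φε φη hφε0 hφεi hφε1 hφεs hφη0 hφηi hφη1 hφηs x
  obtain ⟨ψε, hmε, heqε, h0ε, hiε, hintε', hsε⟩ := exists_nice_mollifier hφε0 hφεi hφεs
  obtain ⟨ψη, hmη, heqη, h0η, hiη, hintη', hsη⟩ := exists_nice_mollifier hφη0 hφηi hφηs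
  have hintε : (∫ y, ψε y) = 1 := by rw [hintε', hφε1]
  have hintη : (∫ y, ψη y) = 1 := by rw [hintη', hφη1]
  set x' : Euc d := w x with hx'
  have hKm : ∀ a, MeasurableSet (K a) := fun a => (hyp.compact a).isClosed.measurableSet
  -- replace the mollifiers by strongly measurable versions
  have hmeq : ∀ A : Set (Euc d), mollInd φε A = mollInd ψε A := by
    intro A
    funext z
    refine integral_congr_ae ?_
    filter_upwards [heqε] with y hy
    rw [hy]
  have hm2eq : mollInd2 φε φη K x' = mollInd2 ψε ψη K x' := by
    funext z
    rw [mollInd2, mollInd2]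
    refine integral_congr_ae ?_
    filter_upwards [heqη] with y' hy'
    have h1 : (∫ y, (K (x' - y')).indicator (fun _ => (1:ℝ)) (z - y) * φε y)
        = ∫ y, (K (x' - y')).indicator (fun _ => (1:ℝ)) (z - y) * ψε y := by
      simpa [mollInd] using congrFun (hmeq (K (x' - y'))) z
    rw [h1, hy']
  -- basic properties of the single mollification
  have hcont : ∀ z, Continuous fun y' => mollInd ψε (K (x' - y')) z :=
    fun z => mollInd_cont hC₀ hyp hmε h0ε hiε x' z
  have hFz : ∀ y', StronglyMeasurable fun z => mollInd ψε (K (x' - y')) z :=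
    fun _ => mollInd_stronglyMeasurable hmε (hKm _)
  have hFun : StronglyMeasurable (Function.uncurry fun y' z => mollInd ψε (K (x' - y')) z) :=
    stronglyMeasurable_uncurry_of_continuous_of_stronglyMeasurable hcont hFz
  have hGm : StronglyMeasurable (mollInd ψε (K x')) := mollInd_stronglyMeasurable hmε (hKm x')
  have hF0 : ∀ y' z, 0 ≤ mollInd ψε (K (x' - y')) z := fun _ z => mollInd_nonneg h0ε _ z
  have hF1 : ∀ y' z, mollInd ψε (K (x' - y')) z ≤ 1 :=
    fun _ z => mollInd_le_one hmε h0ε hiε hintε (hKm _) z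
  have hswap : StronglyMeasurable (fun p : Euc d × Euc d => mollInd ψε (K (x' - p.2)) p.1 * ψη p.2) :=
    (hFun.comp_measurable measurable_swap).mul (hmη.comp_measurable measurable_snd)
  have h2m : StronglyMeasurable (fun z => mollInd2 ψε ψη K x' z) := by
    have h2r : (fun z => mollInd2 ψε ψη K x' z)
        = fun z => ∫ y', (fun p : Euc d × Euc d => mollInd ψε (K (x' - p.2)) p.1 * ψη p.2) (z, y') := rfl
    rw [h2r]
    exact hswap.integral_prod_right'
  have hgm : StronglyMeasurable fun z => |mollInd2 ψε ψη K x' z - mollInd ψε (K x') z| :=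
    ((h2m.measurable.sub hGm.measurable).abs).stronglyMeasurable
  -- pointwise bound by a double lintegral
  have step1 : ∀ z, ENNReal.ofReal |mollInd2 ψε ψη K x' z - mollInd ψε (K x') z|
      ≤ ∫⁻ y', ENNReal.ofReal
          (|mollInd ψε (K (x' - y')) z - mollInd ψε (K x') z| * ψη y') := by
    intro z
    have hFzz : StronglyMeasurable fun y' => mollInd ψε (K (x' - y')) z := (hcont z).stronglyMeasurable
    have hintF : Integrable fun y' => mollInd ψε (K (x' - y')) z * ψη y' := by
      refine hiη.mono (hFzz.mul hmη).aestronglyMeasurable (ae_of_all _ fun y' => ?_)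
      rw [Real.norm_eq_abs, Real.norm_eq_abs, abs_mul, abs_of_nonneg (hF0 y' z),
        abs_of_nonneg (h0η y')]
      calc mollInd ψε (K (x' - y')) z * ψη y' ≤ 1 * ψη y' :=
            mul_le_mul_of_nonneg_right (hF1 y' z) (h0η y')
        _ = ψη y' := one_mul _
    have hintG : Integrable fun y' => mollInd ψε (K x') z * ψη y' := hiη.const_mul _
    have hrepr : mollInd2 ψε ψη K x' z - mollInd ψε (K x') z
        = ∫ y', (mollInd ψε (K (x' - y')) z - mollInd ψε (K x') z) * ψη y' := by
      have h2r : mollInd2 ψε ψη K x' z = ∫ y', mollInd ψε (K (x' - y')) z * ψη y' := rfl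
      have h3 : (∫ y', (mollInd ψε (K (x' - y')) z - mollInd ψε (K x') z) * ψη y')
          = (∫ y', mollInd ψε (K (x' - y')) z * ψη y')
            - ∫ y', mollInd ψε (K x') z * ψη y' := by
        rw [← integral_sub hintF hintG]
        congr 1
        funext y'
        ring
      rw [h2r, h3, integral_const_mul, hintη, mul_one]
    rw [hrepr]
    have habs : |∫ y', (mollInd ψε (K (x' - y')) z - mollInd ψε (K x') z) * ψη y'|
        ≤ ∫ y', |mollInd ψε (K (x' - y')) z - mollInd ψε (K x') z| * ψη y' := by
      have hn := norm_integral_le_integral_norm (μ := volume)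
        (fun y' => (mollInd ψε (K (x' - y')) z - mollInd ψε (K x') z) * ψη y')
      simp only [Real.norm_eq_abs] at hn
      refine hn.trans (le_of_eq (integral_congr_ae (ae_of_all _ fun y' => ?_)))
      simp only [abs_mul, abs_of_nonneg (h0η y')]
    have hae2 : AEStronglyMeasurable
        (fun y' => |mollInd ψε (K (x' - y')) z - mollInd ψε (K x') z| * ψη y') volume :=
      (((hFzz.measurable.sub measurable_const).abs).mul hmη.measurable).aestronglyMeasurable
    refine (ENNReal.ofReal_le_ofReal habs).trans ?_
    rw [integral_eq_lintegral_of_nonneg_ae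
      (ae_of_all _ fun y' => mul_nonneg (abs_nonneg _) (h0η y')) hae2]
    exact ENNReal.ofReal_toReal_le
  -- joint measurability for the swap
  have hjm : Measurable (Function.uncurry fun z y' => ENNReal.ofReal
      (|mollInd ψε (K (x' - y')) z - mollInd ψε (K x') z| * ψη y')) := by
    have hbase : Measurable (fun p : Euc d × Euc d =>
        (|mollInd ψε (K (x' - p.2)) p.1 - mollInd ψε (K x') p.1| * ψη p.2)) :=
      (((hFun.comp_measurable measurable_swap).measurable.sub
        (hGm.measurable.comp measurable_fst)).abs).mul (hmη.measurable.comp measurable_snd)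
    exact hbase.ennreal_ofReal
  -- per-`y'` bound
  have step3 : ∀ y' : Euc d, (∫⁻ z, ENNReal.ofReal
      (|mollInd ψε (K (x' - y')) z - mollInd ψε (K x') z| * ψη y'))
      ≤ ENNReal.ofReal (C * η) * ENNReal.ofReal (ψη y') := by
    intro y'
    have hmz : Measurable fun z =>
        ENNReal.ofReal |mollInd ψε (K (x' - y')) z - mollInd ψε (K x') z| :=
      (((hFz y').measurable.sub hGm.measurable).abs).ennreal_ofReal
    have e : ∀ z, ENNReal.ofReal
        (|mollInd ψε (K (x' - y')) z - mollInd ψε (K x') z| * ψη y')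
        = ENNReal.ofReal |mollInd ψε (K (x' - y')) z - mollInd ψε (K x') z|
          * ENNReal.ofReal (ψη y') := fun z => ENNReal.ofReal_mul (abs_nonneg _)
    simp only [e]
    rw [lintegral_mul_const _ hmz]
    by_cases hzero : ψη y' = 0
    · simp [hzero]
    · refine mul_le_mul_left ?_ _
      have hmem : y' ∈ Metric.closedBall (0 : Euc d) η := hsη (Function.mem_support.mpr hzero)
      have hnorm : ‖y'‖ ≤ η := by rwa [Metric.mem_closedBall, dist_zero_right] at hmem
      have hptw : ∀ z, ENNReal.ofReal |mollInd ψε (K (x' - y')) z - mollInd ψε (K x') z|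
          ≤ ENNReal.ofReal (∫ y, (symmDiff (K (x' - y')) (K x')).indicator
              (fun _ => (1:ℝ)) (z - y) * ψε y) := fun z =>
        ENNReal.ofReal_le_ofReal (mollInd_sub_abs_le hmε h0ε hiε (hKm x') (hKm _) z)
      refine (lintegral_mono hptw).trans ?_
      refine (lintegral_mollInd_le hmε h0ε hiε hintε ((hKm _).symmDiff (hKm x'))).trans ?_
      have hab : ‖(x' - y') - x'‖ ≤ η := by
        rw [show (x' - y') - x' = -y' by abel, norm_neg]
        exact hnorm
      exact vol_symmDiff hC₀ hyp _ _ hab hη hη1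
  -- put everything together
  have final : (∫⁻ y', ENNReal.ofReal (C * η) * ENNReal.ofReal (ψη y'))
      = ENNReal.ofReal (C * η) := by
    rw [lintegral_const_mul _ hmη.measurable.ennreal_ofReal,
      ← ofReal_integral_eq_lintegral_ofReal hiη (ae_of_all _ h0η), hintη,
      ENNReal.ofReal_one, mul_one]
  have hlin : (∫⁻ z, ENNReal.ofReal |mollInd2 ψε ψη K x' z - mollInd ψε (K x') z|)
      ≤ ENNReal.ofReal (C * η) := by
    calc (∫⁻ z, ENNReal.ofReal |mollInd2 ψε ψη K x' z - mollInd ψε (K x') z|)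
        ≤ ∫⁻ z, ∫⁻ y', ENNReal.ofReal
            (|mollInd ψε (K (x' - y')) z - mollInd ψε (K x') z| * ψη y') :=
          lintegral_mono step1
      _ = ∫⁻ y', ∫⁻ z, ENNReal.ofReal
            (|mollInd ψε (K (x' - y')) z - mollInd ψε (K x') z| * ψη y') :=
          lintegral_lintegral_swap hjm.aemeasurable
      _ ≤ ∫⁻ y', ENNReal.ofReal (C * η) * ENNReal.ofReal (ψη y') := lintegral_mono step3
      _ = ENNReal.ofReal (C * η) := final
  calc ∫ y, |mollInd2 φε φη K x' (y - x) - mollInd φε (K x') (y - x)|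
      = ∫ z, |mollInd2 ψε ψη K x' z - mollInd ψε (K x') z| := by
        rw [hm2eq, hmeq]
        exact integral_sub_right_eq_self
          (fun z => |mollInd2 ψε ψη K x' z - mollInd ψε (K x') z|) x
    _ = (∫⁻ z, ENNReal.ofReal |mollInd2 ψε ψη K x' z - mollInd ψε (K x') z|).toReal :=
        integral_eq_lintegral_of_nonneg_ae (ae_of_all _ fun z => abs_nonneg _)
          hgm.aestronglyMeasurable
    _ ≤ C * η := ENNReal.toReal_le_of_le_ofReal (by positivity) hlin
end
end

section
/- Let m, N be positive integers with N ≥ (2m)², let Y₁, …, Y_N be independent identically distributed random variables with law ρ, a Borel probability measure on ℝ^d, and let ρ^N := (1/N) Σ_{i=1}^N δ_{Y_i}. Let ∇φ : ℝ^d → ℝ^d be bounded and Lipschitz, let K be a map from ℝ^d to compact subsets of ℝ^d and w : ℝ^d → ℝ^d a map such that (y, z) ↦ 1_{K(w(y))}(z − y) is Borel measurable. Then E[ sup_{i=1,…,N} | ∫ 1_{K(w(Y_i))}(y − Y_i) ∇φ(Y_i − y) (ρ^N − ρ)(dy) |^{2m} ]^{1/(2m)} ≤ ‖∇φ‖_{L∞}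 ((2m)!)^{1/(2m)} √(8m) N^{−1/2 + 1/(2m)}. -/
section LLNAuxSection
open MeasureTheory ProbabilityTheory Finset Function
open scoped RealInnerProductSpace
noncomputable section
namespace LLNAux

lemma nat_count_ineq (m : ℕ) (hm : 0 < m) :
    (m + 1) ^ (2 * m) ≤ Nat.factorial (2 * m) * (2 * m) ^ m := by
  have h1 : (m + 1) ^ (2 * m) = ((m + 1) ^ 2) ^ m := by rw [← pow_mul, mul_comm 2 m, pow_mul]
  have h2 : (m + 1) ^ 2 ≤ (2 * m) * (m + 1) := by nlinarith
  have h3 : ((m + 1) ^ 2) ^ m ≤ ((2 * m) * (m + 1)) ^ m := Nat.pow_le_pow_left h2 m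
  have h4 : ((2 * m) * (m + 1)) ^ m = (2 * m) ^ m * (m + 1) ^ m := mul_pow _ _ _
  have h5 : (m + 1) ^ m ≤ Nat.factorial (2 * m) := by
    calc (m + 1) ^ m ≤ (m + 1).ascFactorial m := Nat.pow_succ_le_ascFactorial _ _
      _ ≤ Nat.factorial m * (m + 1).ascFactorial m := Nat.le_mul_of_pos_left _ (Nat.factorial_pos m)
      _ = Nat.factorial (m + m) := Nat.factorial_mul_ascFactorial m m
      _ = Nat.factorial (2 * m) := by rw [two_mul]
  calc (m + 1) ^ (2 * m) = ((m + 1) ^ 2) ^ m := h1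
    _ ≤ (2 * m) ^ m * (m + 1) ^ m := h3.trans_eq h4
    _ ≤ (2 * m) ^ m * Nat.factorial (2 * m) := Nat.mul_le_mul_left _ h5
    _ = Nat.factorial (2 * m) * (2 * m) ^ m := Nat.mul_comm _ _

lemma map_joint_eq_pi {Ω : Type*} [MeasurableSpace Ω] (P : Measure Ω) [IsProbabilityMeasure P]
    {E : Type*} [MeasurableSpace E] {N : ℕ} (ρ : Measure E) [IsProbabilityMeasure ρ]
    (Y : Fin N → Ω → E) (hYmeas : ∀ i, Measurable (Y i))
    (hlaw : ∀ i, Measure.map (Y i) P = ρ)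
    (hindep : iIndepFun Y P) :
    Measure.map (fun ω i => Y i ω) P = Measure.pi fun _ => ρ := by
  refine (Measure.pi_eq fun s hs => ?_).symm
  rw [Measure.map_apply (measurable_pi_lambda _ fun i => hYmeas i) (MeasurableSet.univ_pi hs)]
  have hpre : (fun ω i => Y i ω) ⁻¹' Set.pi Set.univ s = ⋂ i ∈ Finset.univ, Y i ⁻¹' s i := by
    ext ω; simp [Set.mem_pi]
  rw [hpre, hindep.meas_biInter (fun i _ => ⟨s i, hs i, rfl⟩)]
  exact Finset.prod_congr rfl fun i _ => by
    rw [← hlaw i, Measure.map_apply (hYmeas i) (hs i)]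


lemma map_update_pi {E : Type*} [MeasurableSpace E] {N : ℕ} (ρ : Measure E)
    [IsProbabilityMeasure ρ] (r : Fin N) :
    Measure.map (fun p : (Fin N → E) × E => Function.update p.1 r p.2)
      ((Measure.pi fun _ : Fin N => ρ).prod ρ) = Measure.pi fun _ => ρ := by
  refine (Measure.pi_eq fun s hs => ?_).symm
  have hmeas : Measurable fun p : (Fin N → E) × E => Function.update p.1 r p.2 :=
    measurable_update'.comp (measurable_fst.prodMk measurable_snd)
  rw [Measure.map_apply hmeas (MeasurableSet.univ_pi hs)]
  have hpre : (fun p : (Fin N → E) × E => Function.update p.1 r p.2) ⁻¹' Set.pi Set.univ s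
      = (Set.pi Set.univ (Function.update s r Set.univ)) ×ˢ (s r) := by
    ext ⟨x, z⟩
    simp only [Set.mem_preimage, Set.mem_pi, Set.mem_univ, true_implies, Set.mem_prod]
    constructor
    · intro h
      refine ⟨fun j => ?_, by simpa using h r⟩
      by_cases hj : j = r
      · subst hj; simp
      · have := h j
        rw [Function.update_of_ne hj] at this ⊢
        exact this
    · rintro ⟨h1, h2⟩ j
      by_cases hj : j = r
      · subst hj; simpa using h2
      · have := h1 j
        rw [Function.update_of_ne hj] at this ⊢
        exact this
  rw [hpre, Measure.prod_prod, Measure.pi_pi]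
  have : ∀ j, ρ (Function.update s r Set.univ j) = Function.update (fun j => ρ (s j)) r 1 j := by
    intro j
    by_cases hj : j = r
    · subst hj; simp
    · rw [Function.update_of_ne hj, Function.update_of_ne hj]
  rw [Finset.prod_congr rfl fun j _ => this j]
  rw [Finset.prod_update_of_mem (Finset.mem_univ r), one_mul]
  rw [← Finset.prod_erase_mul Finset.univ _ (Finset.mem_univ r), Finset.sdiff_singleton_eq_erase]

lemma integral_update_pi {E : Type*} [MeasurableSpace E] {N : ℕ} (ρ : Measure E)
    [IsProbabilityMeasure ρ] (r : Fin N) (Φ : (Fin N → E) → ℝ)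
    (hΦ : Measurable Φ) (C : ℝ) (hC : ∀ x, |Φ x| ≤ C) :
    ∫ x, Φ x ∂(Measure.pi fun _ : Fin N => ρ)
      = ∫ x, ∫ z, Φ (Function.update x r z) ∂ρ ∂(Measure.pi fun _ : Fin N => ρ) := by
  have hmeas : Measurable fun p : (Fin N → E) × E => Function.update p.1 r p.2 :=
    measurable_update'.comp (measurable_fst.prodMk measurable_snd)
  conv_lhs => rw [← map_update_pi ρ r]
  rw [integral_map hmeas.aemeasurable hΦ.aestronglyMeasurable]
  have hint : Integrable (fun p : (Fin N → E) × E => Φ (Function.update p.1 r p.2))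
      (((Measure.pi fun _ : Fin N => ρ)).prod ρ) := by
    refine Integrable.mono' (integrable_const C) ((hΦ.comp hmeas).aestronglyMeasurable)
      (Filter.Eventually.of_forall fun p => ?_)
    simpa [Real.norm_eq_abs] using hC _
  exact MeasureTheory.integral_prod _ hint


def cnt {m N : ℕ} (a : Fin m → Fin N × Fin N) (r : Fin N) : ℕ :=
  ∑ l, ((if (a l).1 = r then 1 else 0) + (if (a l).2 = r then 1 else 0))

lemma cnt_total {m N : ℕ} (a : Fin m → Fin N × Fin N) : ∑ r, cnt a r = 2 * m := by
  unfold cnt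
  rw [Finset.sum_comm]
  have : ∀ l : Fin m, ∑ r : Fin N,
      ((if (a l).1 = r then 1 else 0) + (if (a l).2 = r then 1 else 0)) = 2 := by
    intro l
    rw [Finset.sum_add_distrib]
    simp [Finset.sum_ite_eq]
  rw [Finset.sum_congr rfl fun l _ => this l, Finset.sum_const]
  simp [Finset.card_univ, mul_comm]

lemma cnt_pos_fst {m N : ℕ} (a : Fin m → Fin N × Fin N) (l : Fin m) : cnt a (a l).1 ≠ 0 := by
  unfold cnt
  intro h
  rw [Finset.sum_eq_zero_iff] at h
  have := h l (Finset.mem_univ l)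
  simp at this

lemma cnt_pos_snd {m N : ℕ} (a : Fin m → Fin N × Fin N) (l : Fin m) : cnt a (a l).2 ≠ 0 := by
  unfold cnt
  intro h
  rw [Finset.sum_eq_zero_iff] at h
  have := h l (Finset.mem_univ l)
  simp at this

lemma card_G_le (m N : ℕ) (hmN : m ≤ N) (i : Fin N) :
    ((Fintype.piFinset fun _ : Fin m => (Finset.univ : Finset (Fin N × Fin N))).filter
      fun a => ∀ r : Fin N, r ≠ i → cnt a r ≠ 1).card ≤ N ^ m * (m + 1) ^ (2 * m) := by
  classical
  set G := ((Fintype.piFinset fun _ : Fin m => (Finset.univ : Finset (Fin N × Fin N))).filter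
      fun a => ∀ r : Fin N, r ≠ i → cnt a r ≠ 1) with hG
  have hsub : G ⊆ (Finset.powersetCard m (Finset.univ : Finset (Fin N))).biUnion
      (fun s => Fintype.piFinset fun _ : Fin m => (insert i s) ×ˢ (insert i s)) := by
    intro a ha
    rw [hG, Finset.mem_filter] at ha
    obtain ⟨-, ha2⟩ := ha
    set sa := Finset.univ.filter (fun r : Fin N => r ≠ i ∧ cnt a r ≠ 0) with hsa
    have hcard : sa.card ≤ m := by
      have h2 : sa.card • 2 ≤ ∑ r ∈ sa, cnt a r := by
        refine Finset.card_nsmul_le_sum sa (cnt a) 2 ?_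
        intro r hr
        rw [hsa, Finset.mem_filter] at hr
        have := ha2 r hr.2.1
        omega
      rw [smul_eq_mul] at h2
      have h3 : ∑ r ∈ sa, cnt a r ≤ ∑ r : Fin N, cnt a r :=
        Finset.sum_le_sum_of_subset (Finset.subset_univ sa)
      rw [cnt_total] at h3
      omega
    obtain ⟨s, hsas, -, hscard⟩ := Finset.exists_subsuperset_card_eq
      (Finset.subset_univ sa) hcard (by simpa using hmN)
    rw [Finset.mem_biUnion]
    refine ⟨s, Finset.mem_powersetCard.mpr ⟨Finset.subset_univ s, hscard⟩, ?_⟩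
    rw [Fintype.mem_piFinset]
    intro l
    rw [Finset.mem_product]
    constructor
    · by_cases h1 : (a l).1 = i
      · rw [h1]; exact Finset.mem_insert_self i s
      · refine Finset.mem_insert_of_mem (hsas ?_)
        rw [hsa, Finset.mem_filter]
        exact ⟨Finset.mem_univ _, h1, cnt_pos_fst a l⟩
    · by_cases h1 : (a l).2 = i
      · rw [h1]; exact Finset.mem_insert_self i s
      · refine Finset.mem_insert_of_mem (hsas ?_)
        rw [hsa, Finset.mem_filter]
        exact ⟨Finset.mem_univ _, h1, cnt_pos_snd a l⟩
  calc G.card ≤ ∑ s ∈ Finset.powersetCard m (Finset.univ : Finset (Fin N)),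
        (Fintype.piFinset fun _ : Fin m => (insert i s) ×ˢ (insert i s)).card :=
      (Finset.card_le_card hsub).trans (Finset.card_biUnion_le)
    _ ≤ ∑ s ∈ Finset.powersetCard m (Finset.univ : Finset (Fin N)), (m + 1) ^ (2 * m) := by
      refine Finset.sum_le_sum fun s hs => ?_
      rw [Finset.mem_powersetCard] at hs
      rw [Fintype.card_piFinset]
      have hins : (insert i s).card ≤ m + 1 := (Finset.card_insert_le i s).trans (by omega)
      calc ∏ _l : Fin m, ((insert i s) ×ˢ (insert i s)).card
          = (((insert i s).card * (insert i s).card)) ^ m := by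
            rw [Finset.prod_const, Finset.card_univ, Fintype.card_fin, Finset.card_product]
        _ ≤ ((m + 1) * (m + 1)) ^ m := Nat.pow_le_pow_left (Nat.mul_le_mul hins hins) m
        _ = (m + 1) ^ (2 * m) := by rw [← pow_two, ← pow_mul, mul_comm 2 m, mul_comm m 2]
    _ ≤ N ^ m * (m + 1) ^ (2 * m) := by
      rw [Finset.sum_const, Finset.card_powersetCard]
      simp only [Finset.card_univ, Fintype.card_fin, smul_eq_mul]
      exact Nat.mul_le_mul_right _ (Nat.choose_le_pow N m)




-- unique occurrence structure
lemma cnt_one {m N : ℕ} (a : Fin m → Fin N × Fin N) (r : Fin N) (h : cnt a r = 1) :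
    ∃ l0 : Fin m,
      (((a l0).1 = r ∧ (a l0).2 ≠ r) ∨ ((a l0).1 ≠ r ∧ (a l0).2 = r)) ∧
      ∀ l, l ≠ l0 → (a l).1 ≠ r ∧ (a l).2 ≠ r := by
  classical
  unfold cnt at h
  set t : Fin m → ℕ := fun l => (if (a l).1 = r then 1 else 0) + (if (a l).2 = r then 1 else 0)
    with ht
  have h' : ∑ l, t l = 1 := h
  obtain ⟨l0, -, hl0⟩ := Finset.exists_ne_zero_of_sum_ne_zero (by rw [h']; norm_num :
    ∑ l, t l ≠ 0)
  have hsplit : t l0 + ∑ l ∈ univ.erase l0, t l = 1 := by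
    rw [Finset.add_sum_erase univ t (Finset.mem_univ l0)]; exact h'
  have hl0' : t l0 = 1 ∧ ∑ l ∈ univ.erase l0, t l = 0 := by omega
  have hrest : ∀ l, l ≠ l0 → t l = 0 := by
    intro l hl
    have := (Finset.sum_eq_zero_iff.mp hl0'.2) l (Finset.mem_erase.mpr ⟨hl, Finset.mem_univ l⟩)
    exact this
  refine ⟨l0, ?_, fun l hl => ?_⟩
  · have := hl0'.1
    rw [ht] at this
    simp only at this
    by_cases h1 : (a l0).1 = r <;> by_cases h2 : (a l0).2 = r <;>
      simp [h1, h2] at this ⊢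
  · have := hrest l hl
    rw [ht] at this
    simp only at this
    by_cases h1 : (a l).1 = r <;> by_cases h2 : (a l).2 = r <;> simp [h1, h2] at this ⊢

variable {E : Type*} [NormedAddCommGroup E] [InnerProductSpace ℝ E] [CompleteSpace E]
  [MeasurableSpace E] [BorelSpace E] [SecondCountableTopology E]

theorem moment_bound {N m : ℕ} (hm : 0 < m) (hmN : m ≤ N)
    (ρ : Measure E) [IsProbabilityMeasure ρ]
    (g : E → E → E) (hgmeas : Measurable fun p : E × E => g p.1 p.2)
    (b : ℝ) (hb0 : 0 ≤ b) (hb : ∀ x y, ‖g x y‖ ≤ b)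
    (hgzero : ∀ x, ∫ y, g x y ∂ρ = 0) (i : Fin N) :
    ∫ x, ‖(N : ℝ)⁻¹ • ∑ j, g (x i) (x j)‖ ^ (2 * m) ∂(Measure.pi fun _ : Fin N => ρ)
      ≤ ((N ^ m * (m + 1) ^ (2 * m) : ℕ) : ℝ) * b ^ (2 * m) / (N : ℝ) ^ (2 * m) := by
  classical
  set π := (Measure.pi fun _ : Fin N => ρ) with hπ
  haveI : IsProbabilityMeasure π := by rw [hπ]; infer_instance
  set c : (Fin N → E) → (Fin N × Fin N) → ℝ :=
    fun x p => ⟪g (x i) (x p.1), g (x i) (x p.2)⟫ with hc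
  have hgx : ∀ j : Fin N, Measurable fun x : Fin N → E => g (x i) (x j) := fun j =>
    Measurable.comp (f := fun x : Fin N → E => (x i, x j)) hgmeas
      ((measurable_pi_apply i).prodMk (measurable_pi_apply j))
  have hcmeas : ∀ p : Fin N × Fin N, Measurable fun x => c x p := fun p =>
    (hgx p.1).inner (hgx p.2)
  have hprodmeas : ∀ a : Fin m → Fin N × Fin N, Measurable fun x => ∏ l, c x (a l) :=
    fun a => Finset.measurable_prod _ fun l _ => hcmeas (a l)
  have hcbound : ∀ x p, |c x p| ≤ b ^ 2 := by
    intro x p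
    calc |c x p| ≤ ‖g (x i) (x p.1)‖ * ‖g (x i) (x p.2)‖ := abs_real_inner_le_norm _ _
      _ ≤ b * b := mul_le_mul (hb _ _) (hb _ _) (norm_nonneg _) hb0
      _ = b ^ 2 := (sq b).symm
  have hprodbound : ∀ a : Fin m → Fin N × Fin N, ∀ x, |∏ l, c x (a l)| ≤ b ^ (2 * m) := by
    intro a x
    calc |∏ l, c x (a l)| = ∏ l, |c x (a l)| := Finset.abs_prod _ _
      _ ≤ ∏ _l : Fin m, b ^ 2 :=
        Finset.prod_le_prod (fun l _ => abs_nonneg _) (fun l _ => hcbound x (a l))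
      _ = b ^ (2 * m) := by rw [Finset.prod_const, Finset.card_univ, Fintype.card_fin, ← pow_mul]
  have hint : ∀ a : Fin m → Fin N × Fin N, Integrable (fun x => ∏ l, c x (a l)) π :=
    fun a => Integrable.mono' (integrable_const (b ^ (2 * m)))
      (hprodmeas a).aestronglyMeasurable
      (Filter.Eventually.of_forall fun x => by
        rw [Real.norm_eq_abs]; exact hprodbound a x)
  -- expansion
  have expand : ∀ x : Fin N → E, ‖(N : ℝ)⁻¹ • ∑ j, g (x i) (x j)‖ ^ (2 * m)
      = ((N : ℝ) ^ (2 * m))⁻¹ *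
        ∑ a ∈ Fintype.piFinset (fun _ : Fin m => (univ : Finset (Fin N × Fin N))),
          ∏ l, c x (a l) := by
    intro x
    have h1 : ‖(N : ℝ)⁻¹ • ∑ j, g (x i) (x j)‖ ^ 2
        = ((N : ℝ) ^ 2)⁻¹ * ∑ p : Fin N × Fin N, c x p := by
      rw [← real_inner_self_eq_norm_sq, real_inner_smul_left, real_inner_smul_right, sum_inner]
      simp_rw [inner_sum]
      rw [← Fintype.sum_prod_type']
      ring
    calc ‖(N : ℝ)⁻¹ • ∑ j, g (x i) (x j)‖ ^ (2 * m)
        = (‖(N : ℝ)⁻¹ • ∑ j, g (x i) (x j)‖ ^ 2) ^ m := by rw [← pow_mul]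
      _ = (((N : ℝ) ^ 2)⁻¹) ^ m * (∑ p : Fin N × Fin N, c x p) ^ m := by rw [h1, mul_pow]
      _ = ((N : ℝ) ^ (2 * m))⁻¹ *
          ∑ a ∈ Fintype.piFinset (fun _ : Fin m => (univ : Finset (Fin N × Fin N))),
            ∏ l, c x (a l) := by
          rw [← inv_pow, ← pow_mul, inv_pow]
          congr 1
          rw [← Finset.prod_univ_sum (fun _ : Fin m => (univ : Finset (Fin N × Fin N)))
            (fun _ p => c x p)]
          rw [Finset.prod_const, Finset.card_univ, Fintype.card_fin]
  -- vanishing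
  have vanish : ∀ a ∈ Fintype.piFinset (fun _ : Fin m => (univ : Finset (Fin N × Fin N))),
      ¬(∀ r : Fin N, r ≠ i → cnt a r ≠ 1) → ∫ x, ∏ l, c x (a l) ∂π = 0 := by
    intro a _ hnot
    push_neg at hnot
    obtain ⟨r, hri, hr1⟩ := hnot
    obtain ⟨l0, hl0, hrest⟩ := cnt_one a r hr1
    rw [hπ, integral_update_pi ρ r _ (hprodmeas a) (b ^ (2 * m)) (hprodbound a)]
    rw [← hπ]
    have hinner : ∀ x : Fin N → E, ∫ z, ∏ l, c (Function.update x r z) (a l) ∂ρ = 0 := by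
      intro x
      have hgint : Integrable (fun z => g (x i) z) ρ :=
        Integrable.mono' (integrable_const b)
          ((hgmeas.comp (measurable_const.prodMk measurable_id)).aestronglyMeasurable)
          (Filter.Eventually.of_forall fun z => hb _ _)
      have hupdi : ∀ z : E, Function.update x r z i = x i := fun z =>
        Function.update_of_ne (Ne.symm hri) _ _
      have hsplitprod : ∀ z : E, ∏ l, c (Function.update x r z) (a l)
          = c (Function.update x r z) (a l0) * ∏ l ∈ univ.erase l0, c x (a l) := by
        intro z
        rw [← Finset.mul_prod_erase univ _ (Finset.mem_univ l0)]
        congr 1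
        refine Finset.prod_congr rfl fun l hl => ?_
        obtain ⟨h1, h2⟩ := hrest l (Finset.mem_erase.mp hl).1
        simp only [hc]
        rw [hupdi, Function.update_of_ne h1, Function.update_of_ne h2]
      simp_rw [hsplitprod]
      rw [integral_mul_const]
      have : ∫ z, c (Function.update x r z) (a l0) ∂ρ = 0 := by
        rcases hl0 with ⟨h1, h2⟩ | ⟨h1, h2⟩
        · have : ∀ z, c (Function.update x r z) (a l0) = ⟪g (x i) (x (a l0).2), g (x i) z⟫ := by
            intro z
            simp only [hc]
            rw [hupdi, h1, Function.update_self, Function.update_of_ne h2, real_inner_comm]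
          simp_rw [this]
          rw [integral_inner hgint, hgzero, inner_zero_right]
        · have : ∀ z, c (Function.update x r z) (a l0) = ⟪g (x i) (x (a l0).1), g (x i) z⟫ := by
            intro z
            simp only [hc]
            rw [hupdi, h2, Function.update_self, Function.update_of_ne h1]
          simp_rw [this]
          rw [integral_inner hgint, hgzero, inner_zero_right]
      rw [this, zero_mul]
    simp_rw [hinner]
    exact integral_zero _ _
  -- bound each integral
  have hintle : ∀ a : Fin m → Fin N × Fin N, ∫ x, ∏ l, c x (a l) ∂π ≤ b ^ (2 * m) := by
    intro a
    refine le_trans (le_abs_self _) ?_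
    rw [← Real.norm_eq_abs]
    have := norm_integral_le_of_norm_le_const (μ := π)
      (f := fun x => ∏ l, c x (a l)) (C := b ^ (2 * m))
      (Filter.Eventually.of_forall fun x => by rw [Real.norm_eq_abs]; exact hprodbound a x)
    simpa [measure_univ] using this
  set A := Fintype.piFinset (fun _ : Fin m => (univ : Finset (Fin N × Fin N))) with hA
  have hbpow : (0:ℝ) ≤ b ^ (2 * m) := pow_nonneg hb0 _
  calc ∫ x, ‖(N : ℝ)⁻¹ • ∑ j, g (x i) (x j)‖ ^ (2 * m) ∂π
      = ∫ x, ((N : ℝ) ^ (2 * m))⁻¹ * ∑ a ∈ A, ∏ l, c x (a l) ∂π :=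
        integral_congr_ae (Filter.Eventually.of_forall expand)
    _ = ((N : ℝ) ^ (2 * m))⁻¹ * ∫ x, ∑ a ∈ A, ∏ l, c x (a l) ∂π := integral_const_mul _ _
    _ = ((N : ℝ) ^ (2 * m))⁻¹ * ∑ a ∈ A, ∫ x, ∏ l, c x (a l) ∂π := by
        rw [integral_finset_sum A (fun a _ => hint a)]
    _ = ((N : ℝ) ^ (2 * m))⁻¹ *
          ∑ a ∈ A.filter (fun a => ∀ r : Fin N, r ≠ i → cnt a r ≠ 1),
            ∫ x, ∏ l, c x (a l) ∂π := by
        congr 1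
        rw [← Finset.sum_filter_add_sum_filter_not A
          (fun a => ∀ r : Fin N, r ≠ i → cnt a r ≠ 1) (fun a => ∫ x, ∏ l, c x (a l) ∂π)]
        have hzero : ∑ a ∈ A.filter (fun a => ¬(∀ r : Fin N, r ≠ i → cnt a r ≠ 1)),
            ∫ x, ∏ l, c x (a l) ∂π = 0 := by
          refine Finset.sum_eq_zero fun a ha => ?_
          obtain ⟨ha1, ha2⟩ := Finset.mem_filter.mp ha
          exact vanish a ha1 ha2
        rw [hzero, add_zero]
    _ ≤ ((N : ℝ) ^ (2 * m))⁻¹ * (((N ^ m * (m + 1) ^ (2 * m) : ℕ) : ℝ) * b ^ (2 * m)) := by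
        refine mul_le_mul_of_nonneg_left ?_ (by positivity)
        calc ∑ a ∈ A.filter (fun a => ∀ r : Fin N, r ≠ i → cnt a r ≠ 1),
              ∫ x, ∏ l, c x (a l) ∂π
            ≤ (A.filter (fun a => ∀ r : Fin N, r ≠ i → cnt a r ≠ 1)).card • b ^ (2 * m) :=
              Finset.sum_le_card_nsmul _ _ _ (fun a _ => hintle a)
          _ = ((A.filter (fun a => ∀ r : Fin N, r ≠ i → cnt a r ≠ 1)).card : ℝ) * b ^ (2 * m) :=
              nsmul_eq_mul _ _
          _ ≤ ((N ^ m * (m + 1) ^ (2 * m) : ℕ) : ℝ) * b ^ (2 * m) := by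
              refine mul_le_mul_of_nonneg_right ?_ hbpow
              exact_mod_cast card_G_le m N hmN i
    _ = ((N ^ m * (m + 1) ^ (2 * m) : ℕ) : ℝ) * b ^ (2 * m) / (N : ℝ) ^ (2 * m) := by
        rw [div_eq_mul_inv]; ring

end LLNAux
end
end LLNAuxSection

open MeasureTheory Metric Set Pointwise ProbabilityTheory

noncomputable section

/-- Law of large numbers type estimate for the interaction kernel: for i.i.d. samples
`Y₁, …, Y_N` with law `ρ` and `N ≥ (2m)²`,
`E[sup_i |∫ 1_{K(w(Y_i))}(y − Y_i) ∇φ(Y_i − y) (ρ^N − ρ)(dy)|^{2m}]^{1/(2m)}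
  ≤ ‖∇φ‖_{L∞} ((2m)!)^{1/(2m)} √(8m) N^{−1/2 + 1/(2m)}`. -/
theorem lln_interaction_kernel_estimate
    {d : ℕ} (m N : ℕ) (hm : 0 < m) (hN : (2 * m) ^ 2 ≤ N)
    {Ω : Type*} [MeasurableSpace Ω] (P : Measure Ω) [IsProbabilityMeasure P]
    (ρ : Measure (Euc d)) [IsProbabilityMeasure ρ]
    (Y : Fin N → Ω → Euc d) (hYmeas : ∀ i, Measurable (Y i))
    (hlaw : ∀ i, Measure.map (Y i) P = ρ)
    (hindep : iIndepFun Y P)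
    (gradφ : Euc d → Euc d) (Mφ : ℝ) (hMφ : ∀ x, ‖gradφ x‖ ≤ Mφ)
    (Lφ : NNReal) (hLφ : LipschitzWith Lφ gradφ)
    (K : Euc d → Set (Euc d)) (hK : ∀ x, IsCompact (K x)) (w : Euc d → Euc d)
    (hintmeas : Measurable fun p : Euc d × Euc d =>
      (K (w p.1)).indicator (fun _ => (1 : ℝ)) (p.2 - p.1)) :
    (∫ ω, (⨆ i : Fin N,
        ‖((N : ℝ)⁻¹ • ∑ j : Fin N,
            ((K (w (Y i ω))).indicator (fun _ => (1 : ℝ)) (Y j ω - Y i ω)) •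
              gradφ (Y i ω - Y j ω))
          - ∫ y, ((K (w (Y i ω))).indicator (fun _ => (1 : ℝ)) (y - Y i ω)) •
              gradφ (Y i ω - y) ∂ρ‖) ^ (2 * m) ∂P) ^ (1 / (2 * (m : ℝ)))
      ≤ (⨆ x, ‖gradφ x‖) * ((Nat.factorial (2 * m) : ℝ)) ^ (1 / (2 * (m : ℝ)))
          * Real.sqrt (8 * m) * (N : ℝ) ^ (-(1 : ℝ) / 2 + 1 / (2 * (m : ℝ))) := by
  classical
  have hNpos : 0 < N := lt_of_lt_of_le (by positivity) hN
  have hmN : m ≤ N := le_trans (by nlinarith) hN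
  haveI : Nonempty (Fin N) := Fin.pos_iff_nonempty.mp hNpos
  have hNR : (0:ℝ) < (N:ℝ) := by exact_mod_cast hNpos
  have hmR : (0:ℝ) < (m:ℝ) := by exact_mod_cast hm
  -- the sup norm of gradφ
  set S : ℝ := ⨆ x, ‖gradφ x‖ with hSdef
  have hbdd : BddAbove (Set.range fun x : Euc d => ‖gradφ x‖) :=
    ⟨Mφ, by rintro y ⟨x, rfl⟩; exact hMφ x⟩
  have hS : ∀ x, ‖gradφ x‖ ≤ S := fun x => le_ciSup hbdd x
  have hS0 : (0:ℝ) ≤ S := le_trans (norm_nonneg _) (hS 0)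
  -- the kernel f and its mean h
  set f : Euc d → Euc d → Euc d :=
    fun x y => ((K (w x)).indicator (fun _ => (1 : ℝ)) (y - x)) • gradφ (x - y) with hfdef
  have hfmeas : Measurable fun p : Euc d × Euc d => f p.1 p.2 := by
    refine hintmeas.smul ?_
    exact (hLφ.continuous.comp (continuous_fst.sub continuous_snd)).measurable
  have hfb : ∀ x y, ‖f x y‖ ≤ S := by
    intro x y
    rw [hfdef]
    simp only [norm_smul]
    by_cases hxy : y - x ∈ K (w x)
    · rw [Set.indicator_of_mem hxy]
      simpa using hS (x - y)
    · rw [Set.indicator_of_notMem hxy]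
      simpa using hS0
  have hfint : ∀ x, Integrable (f x) ρ := by
    intro x
    refine Integrable.mono' (integrable_const S) ?_ (Filter.Eventually.of_forall fun y => hfb x y)
    exact ((hfmeas.comp (measurable_prodMk_left)).aestronglyMeasurable)
  set h : Euc d → Euc d := fun x => ∫ y, f x y ∂ρ with hhdef
  have hhmeas : StronglyMeasurable h := by
    have := (hfmeas.stronglyMeasurable :
      StronglyMeasurable fun p : Euc d × Euc d => f p.1 p.2).integral_prod_right' (ν := ρ)
    exact this
  have hhb : ∀ x, ‖h x‖ ≤ S := by
    intro x
    have := norm_integral_le_of_norm_le_const (μ := ρ) (f := f x) (C := S)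
      (Filter.Eventually.of_forall fun y => hfb x y)
    simpa [measure_univ] using this
  -- centered kernel
  set g : Euc d → Euc d → Euc d := fun x y => f x y - h x with hgdef
  have hgmeas : Measurable fun p : Euc d × Euc d => g p.1 p.2 :=
    hfmeas.sub (hhmeas.measurable.comp measurable_fst)
  have hgb : ∀ x y, ‖g x y‖ ≤ 2 * S := by
    intro x y
    calc ‖g x y‖ ≤ ‖f x y‖ + ‖h x‖ := norm_sub_le _ _
      _ ≤ S + S := add_le_add (hfb x y) (hhb x)
      _ = 2 * S := by ring
  have hgzero : ∀ x, ∫ y, g x y ∂ρ = 0 := by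
    intro x
    rw [hgdef]
    simp only
    rw [integral_sub (hfint x) (integrable_const _), integral_const]
    simp [hhdef]
  -- the centered empirical average
  set V : (Fin N → Euc d) → Fin N → Euc d :=
    fun x i => (N : ℝ)⁻¹ • ∑ j, g (x i) (x j) with hVdef
  have hsum_rw : ∀ x : Fin N → Euc d, ∀ i : Fin N,
      ((N : ℝ)⁻¹ • ∑ j : Fin N,
          ((K (w (x i))).indicator (fun _ => (1 : ℝ)) (x j - x i)) • gradφ (x i - x j))
        - (∫ y, ((K (w (x i))).indicator (fun _ => (1 : ℝ)) (y - x i)) • gradφ (x i - y) ∂ρ)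
      = V x i := by
    intro x i
    have h1 : ∀ j : Fin N,
        ((K (w (x i))).indicator (fun _ => (1 : ℝ)) (x j - x i)) • gradφ (x i - x j)
          = f (x i) (x j) := fun j => by simp only [hfdef]
    have h2 : (∫ y, ((K (w (x i))).indicator (fun _ => (1 : ℝ)) (y - x i)) • gradφ (x i - y) ∂ρ)
        = h (x i) := by simp only [hhdef, hfdef]
    rw [Finset.sum_congr rfl fun j _ => h1 j, h2]
    simp only [hVdef, hgdef]
    rw [Finset.sum_sub_distrib, Finset.sum_const, Finset.card_univ, Fintype.card_fin, smul_sub]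
    congr 1
    rw [← Nat.cast_smul_eq_nsmul ℝ, smul_smul, inv_mul_cancel₀ hNR.ne', one_smul]
  set F : (Fin N → Euc d) → ℝ := fun x => (⨆ i, ‖V x i‖) ^ (2 * m) with hFdef
  have hgx : ∀ i j : Fin N, Measurable fun x : Fin N → Euc d => g (x i) (x j) := fun i j =>
    Measurable.comp (f := fun x : Fin N → Euc d => (x i, x j)) hgmeas
      ((measurable_pi_apply i).prodMk (measurable_pi_apply j))
  have hVmeas : ∀ i, Measurable fun x => V x i := by
    intro i
    simp only [hVdef]
    exact (Finset.measurable_sum Finset.univ fun j _ => hgx i j).const_smul ((N:ℝ)⁻¹)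
  have hVb : ∀ x i, ‖V x i‖ ≤ 2 * S := by
    intro x i
    simp only [hVdef]
    calc ‖(N:ℝ)⁻¹ • ∑ j, g (x i) (x j)‖ = (N:ℝ)⁻¹ * ‖∑ j, g (x i) (x j)‖ := by
          rw [norm_smul, Real.norm_eq_abs, abs_of_nonneg (by positivity)]
      _ ≤ (N:ℝ)⁻¹ * ((N:ℝ) * (2*S)) := by
        refine mul_le_mul_of_nonneg_left ?_ (by positivity)
        refine le_trans (norm_sum_le _ _) ?_
        calc ∑ j, ‖g (x i) (x j)‖ ≤ ∑ _j : Fin N, 2*S :=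
            Finset.sum_le_sum fun j _ => hgb _ _
          _ = (N:ℝ) * (2*S) := by
            rw [Finset.sum_const, Finset.card_univ, Fintype.card_fin, nsmul_eq_mul]
      _ = 2*S := by field_simp
  have hsup_nonneg : ∀ x : Fin N → Euc d, 0 ≤ ⨆ i, ‖V x i‖ := fun x =>
    Real.iSup_nonneg fun i => norm_nonneg _
  have hsup_eq : ∀ x : Fin N → Euc d,
      (⨆ i, ‖V x i‖) = Finset.univ.sup' Finset.univ_nonempty (fun i => ‖V x i‖) := fun x =>
    (Finset.sup'_univ_eq_ciSup _).symm
  have hFmeas : Measurable F := by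
    have h1 : Measurable (Finset.univ.sup' (Finset.univ_nonempty)
        (fun i (x : Fin N → Euc d) => ‖V x i‖)) :=
      Finset.measurable_sup' _ fun i _ => (hVmeas i).norm
    have h2 : F = fun x => (Finset.univ.sup' Finset.univ_nonempty
        (fun i (x : Fin N → Euc d) => ‖V x i‖) x) ^ (2*m) := by
      funext x
      rw [hFdef]
      simp only
      rw [hsup_eq, Finset.sup'_apply]
    rw [h2]
    exact h1.pow_const _
  have hFb : ∀ x, |F x| ≤ (2*S)^(2*m) := by
    intro x
    rw [hFdef]
    simp only
    rw [abs_of_nonneg (pow_nonneg (hsup_nonneg x) _)]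
    refine pow_le_pow_left₀ (hsup_nonneg x) ?_ _
    exact Real.iSup_le (fun i => hVb x i) (by positivity)
  have hFle : ∀ x, F x ≤ ∑ i : Fin N, ‖V x i‖^(2*m) := by
    intro x
    rw [hFdef]
    simp only
    rw [hsup_eq]
    obtain ⟨i0, -, hi0⟩ := Finset.exists_mem_eq_sup' Finset.univ_nonempty (fun i => ‖V x i‖)
    rw [hi0]
    exact Finset.single_le_sum (f := fun i => ‖V x i‖^(2*m))
      (fun i _ => pow_nonneg (norm_nonneg _) _) (Finset.mem_univ i0)
  set π := Measure.pi (fun _ : Fin N => ρ) with hπdef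
  haveI : IsProbabilityMeasure π := by rw [hπdef]; infer_instance
  have hjoint : Measurable fun ω => (fun i => Y i ω) := measurable_pi_lambda _ fun i => hYmeas i
  have hstep1 : ∫ ω, (⨆ i : Fin N,
        ‖((N : ℝ)⁻¹ • ∑ j : Fin N,
            ((K (w (Y i ω))).indicator (fun _ => (1 : ℝ)) (Y j ω - Y i ω)) •
              gradφ (Y i ω - Y j ω))
          - ∫ y, ((K (w (Y i ω))).indicator (fun _ => (1 : ℝ)) (y - Y i ω)) •
              gradφ (Y i ω - y) ∂ρ‖) ^ (2 * m) ∂P = ∫ x, F x ∂π := by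
    have hmap := LLNAux.map_joint_eq_pi P ρ Y hYmeas hlaw hindep
    rw [hπdef, ← hmap, integral_map hjoint.aemeasurable hFmeas.aestronglyMeasurable]
    refine integral_congr_ae (Filter.Eventually.of_forall fun ω => ?_)
    rw [hFdef]
    simp only
    congr 1
    refine iSup_congr fun i => ?_
    exact congrArg Norm.norm (hsum_rw (fun j => Y j ω) i)
  have hFint : Integrable F π := Integrable.mono' (integrable_const ((2*S)^(2*m)))
    hFmeas.aestronglyMeasurable
    (Filter.Eventually.of_forall fun x => by rw [Real.norm_eq_abs]; exact hFb x)
  have hVint : ∀ i, Integrable (fun x => ‖V x i‖^(2*m)) π := fun i =>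
    Integrable.mono' (integrable_const ((2*S)^(2*m)))
      (((hVmeas i).norm.pow_const _).aestronglyMeasurable)
      (Filter.Eventually.of_forall fun x => by
        rw [Real.norm_eq_abs, abs_of_nonneg (by positivity)]
        exact pow_le_pow_left₀ (norm_nonneg _) (hVb x i) _)
  have hstep2 : ∫ x, F x ∂π ≤ ∑ i : Fin N, ∫ x, ‖V x i‖^(2*m) ∂π := by
    rw [← integral_finset_sum Finset.univ (fun i _ => hVint i)]
    exact integral_mono hFint (integrable_finset_sum Finset.univ (fun i _ => hVint i)) hFle
  have hstep3 : ∀ i : Fin N, ∫ x, ‖V x i‖^(2*m) ∂π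
      ≤ ((N ^ m * (m + 1) ^ (2 * m) : ℕ) : ℝ) * (2*S) ^ (2 * m) / (N : ℝ) ^ (2 * m) := by
    intro i
    have hrw : (fun x : Fin N → Euc d => ‖V x i‖^(2*m))
        = fun x => ‖(N : ℝ)⁻¹ • ∑ j, g (x i) (x j)‖ ^ (2 * m) := by
      funext x; simp only [hVdef]
    rw [hrw, hπdef]
    exact LLNAux.moment_bound hm hmN ρ g hgmeas (2*S) (by positivity) hgb hgzero i
  set B0 : ℝ := ((N ^ m * (m + 1) ^ (2 * m) : ℕ) : ℝ) * (2*S) ^ (2 * m) / (N : ℝ) ^ (2 * m)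
    with hB0def
  have htotal : ∫ x, F x ∂π ≤ (N:ℝ) * B0 := by
    refine hstep2.trans ?_
    calc ∑ i : Fin N, ∫ x, ‖V x i‖^(2*m) ∂π ≤ ∑ _i : Fin N, B0 :=
        Finset.sum_le_sum fun i _ => hstep3 i
      _ = (N:ℝ) * B0 := by
        rw [Finset.sum_const, Finset.card_univ, Fintype.card_fin, nsmul_eq_mul]
  have hint_nonneg : 0 ≤ ∫ x, F x ∂π := integral_nonneg fun x => by
    rw [hFdef]; exact pow_nonneg (hsup_nonneg x) _
  set R : ℝ := S * ((Nat.factorial (2 * m) : ℝ)) ^ (1 / (2 * (m : ℝ)))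
      * Real.sqrt (8 * m) * (N : ℝ) ^ (-(1 : ℝ) / 2 + 1 / (2 * (m : ℝ))) with hRdef
  have hR0 : 0 ≤ R := by
    rw [hRdef]
    have h1 : (0:ℝ) ≤ ((Nat.factorial (2 * m) : ℝ)) ^ (1 / (2 * (m : ℝ))) :=
      Real.rpow_nonneg (Nat.cast_nonneg _) _
    have h2 : (0:ℝ) ≤ (N : ℝ) ^ (-(1 : ℝ) / 2 + 1 / (2 * (m : ℝ))) :=
      Real.rpow_nonneg hNR.le _
    positivity
  have hRpow : R ^ (2*m) = S^(2*m) * ((Nat.factorial (2*m) : ℝ)) * ((8*(m:ℝ)))^m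
      * ((N:ℝ) * (((N:ℝ)^m)⁻¹)) := by
    rw [hRdef, mul_pow, mul_pow, mul_pow]
    have e1 : (((Nat.factorial (2 * m) : ℝ)) ^ (1 / (2 * (m : ℝ)))) ^ (2*m)
        = ((Nat.factorial (2*m) : ℝ)) := by
      rw [← Real.rpow_natCast (((Nat.factorial (2 * m) : ℝ)) ^ (1 / (2 * (m : ℝ)))) (2*m),
        ← Real.rpow_mul (Nat.cast_nonneg _)]
      have : (1 / (2 * (m:ℝ))) * ((2*m : ℕ) : ℝ) = 1 := by
        push_cast
        field_simp
      rw [this, Real.rpow_one]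
    have e2 : (Real.sqrt (8 * m)) ^ (2*m) = ((8*(m:ℝ)))^m := by
      rw [pow_mul, Real.sq_sqrt (by positivity)]
    have e3 : ((N : ℝ) ^ (-(1 : ℝ) / 2 + 1 / (2 * (m : ℝ)))) ^ (2*m)
        = (N:ℝ) * (((N:ℝ)^m)⁻¹) := by
      rw [← Real.rpow_natCast ((N : ℝ) ^ (-(1 : ℝ) / 2 + 1 / (2 * (m : ℝ)))) (2*m),
        ← Real.rpow_mul hNR.le]
      have : (-(1:ℝ)/2 + 1/(2*(m:ℝ))) * ((2*m : ℕ):ℝ) = 1 - (m:ℝ) := by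
        push_cast
        field_simp
        ring
      rw [this, Real.rpow_sub hNR, Real.rpow_one, Real.rpow_natCast, div_eq_mul_inv]
    rw [e1, e2, e3]
  have key : (N:ℝ) * B0 ≤ R ^ (2*m) := by
    rw [hRpow, hB0def]
    have hcast : ((N ^ m * (m + 1) ^ (2 * m) : ℕ) : ℝ)
        = (N:ℝ)^m * ((m:ℝ)+1)^(2*m) := by push_cast; ring
    have hNsplit : ((N:ℝ))^(2*m) = (N:ℝ)^m * (N:ℝ)^m := by
      rw [two_mul, pow_add]
    have hmain : ((m:ℝ)+1)^(2*m) * (2*S)^(2*m)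
        ≤ S^(2*m) * ((Nat.factorial (2*m) : ℝ)) * ((8*(m:ℝ)))^m := by
      have hnat : ((m:ℝ)+1)^(2*m) ≤ ((Nat.factorial (2*m) : ℝ)) * ((2*(m:ℝ)))^m := by
        have := LLNAux.nat_count_ineq m hm
        have hc : (((m+1)^(2*m) : ℕ) : ℝ) ≤ ((Nat.factorial (2*m) * (2*m)^m : ℕ) : ℝ) := by
          exact_mod_cast this
        push_cast at hc
        convert hc using 2 <;> push_cast <;> ring
      have h2S : (2*S)^(2*m) = (4:ℝ)^m * S^(2*m) := by
        rw [mul_pow]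
        congr 1
        rw [pow_mul]
        norm_num
      rw [h2S]
      calc ((m:ℝ)+1)^(2*m) * ((4:ℝ)^m * S^(2*m))
          ≤ (((Nat.factorial (2*m) : ℝ)) * ((2*(m:ℝ)))^m) * ((4:ℝ)^m * S^(2*m)) := by
            refine mul_le_mul_of_nonneg_right hnat (by positivity)
        _ = S^(2*m) * ((Nat.factorial (2*m) : ℝ)) * (((2*(m:ℝ)))^m * (4:ℝ)^m) := by ring
        _ = S^(2*m) * ((Nat.factorial (2*m) : ℝ)) * ((8*(m:ℝ)))^m := by
            rw [← mul_pow]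
            congr 2
            ring
    calc (N:ℝ) * (((N ^ m * (m + 1) ^ (2 * m) : ℕ) : ℝ) * (2*S) ^ (2 * m) / (N : ℝ) ^ (2 * m))
        = ((N:ℝ) * (((N:ℝ)^m)⁻¹)) * (((m:ℝ)+1)^(2*m) * (2*S)^(2*m)) := by
          rw [hcast, hNsplit]
          field_simp
      _ ≤ ((N:ℝ) * (((N:ℝ)^m)⁻¹)) * (S^(2*m) * ((Nat.factorial (2*m) : ℝ)) * ((8*(m:ℝ)))^m) := by
          refine mul_le_mul_of_nonneg_left hmain (by positivity)
      _ = S^(2*m) * ((Nat.factorial (2*m) : ℝ)) * ((8*(m:ℝ)))^m * ((N:ℝ) * (((N:ℝ)^m)⁻¹)) := by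
          ring
  rw [hstep1]
  have hle : ∫ x, F x ∂π ≤ R ^ (2*m) := htotal.trans key
  have hfin : ((R ^ (2*m) : ℝ)) ^ (1 / (2 * (m:ℝ))) = R := by
    rw [← Real.rpow_natCast R (2*m), ← Real.rpow_mul hR0]
    have : ((2*m : ℕ):ℝ) * (1 / (2 * (m:ℝ))) = 1 := by
      push_cast
      field_simp
    rw [this, Real.rpow_one]
  calc (∫ x, F x ∂π) ^ (1 / (2 * (m:ℝ)))
      ≤ ((R ^ (2*m) : ℝ)) ^ (1 / (2 * (m:ℝ))) :=
        Real.rpow_le_rpow hint_nonneg hle (by positivity)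
    _ = R := hfin
end
end

section
/- For all positive integers m and N, the number of multi-indices α = (α₁, …, α_N) ∈ ℕ^N with α₁ + ⋯ + α_N = 2m and α_i ≠ 1 for every i ∈ {1, …, N} is at most 2 (2m)^m N^m. -/
/-- The number of multi-indices `α ∈ ℕ^N` of order `2m` with no component equal to `1`
is at most `2 (2m)^m N^m`. -/
theorem card_multiIndices_no_one_le (m N : ℕ) (hm : 0 < m) (hN : 0 < N) :
    Nat.card {α : Fin N → ℕ // (∑ i, α i = 2 * m) ∧ ∀ i, α i ≠ 1} ≤
      2 * (2 * m) ^ m * N ^ m := by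
  classical
  set dec : (Fin m → Fin N × Fin (2 * m)) → (Fin N → ℕ) :=
    fun g i => Finset.univ.sup (fun j => if (g j).1 = i then ((g j).2 : ℕ) + 1 else 0)
    with hdec
  have key : ∀ α : {α : Fin N → ℕ // (∑ i, α i = 2 * m) ∧ ∀ i, α i ≠ 1},
      ∃ g : Fin m → Fin N × Fin (2 * m), dec g = α.1 := by
    rintro ⟨α, hsum, hne⟩
    set s := Finset.univ.filter (fun i => α i ≠ 0) with hs
    have hα2 : ∀ i ∈ s, 2 ≤ α i := by
      intro i hi
      simp only [hs, Finset.mem_filter] at hi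
      have := hne i
      omega
    have hle_sum : ∀ i ∈ s, α i ≤ 2 * m := by
      intro i _
      calc α i ≤ ∑ j, α j := Finset.single_le_sum (fun j _ => Nat.zero_le _) (Finset.mem_univ i)
        _ = 2 * m := hsum
    have hk_le : s.card ≤ m := by
      have h1 : 2 * s.card ≤ ∑ i ∈ s, α i := by
        have : ∑ i ∈ s, 2 ≤ ∑ i ∈ s, α i := Finset.sum_le_sum hα2
        simpa [mul_comm] using this
      have h2 : ∑ i ∈ s, α i ≤ ∑ i, α i :=
        Finset.sum_le_sum_of_subset (Finset.subset_univ s)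
      omega
    have hk_pos : 0 < s.card := by
      rcases Finset.exists_ne_zero_of_sum_ne_zero (by omega : ∑ i, α i ≠ 0) with ⟨i, _, hi⟩
      exact Finset.card_pos.2 ⟨i, by simp [hs, hi]⟩
    set e := s.orderIsoOfFin rfl with he
    have hadd : ∀ j : Fin s.card, α (e j) - 1 + 1 = α (e j) := fun j => by
      have := hα2 _ (e j).2; omega
    have hbound : ∀ j : Fin s.card, α (e j) - 1 < 2 * m := fun j => by
      have h1 := hα2 _ (e j).2; have h2 := hle_sum _ (e j).2; omega
    set g : Fin m → Fin N × Fin (2 * m) :=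
      fun j => ((e ⟨min j (s.card - 1), by omega⟩ : Fin N),
                ⟨α (e ⟨min j (s.card - 1), by omega⟩) - 1, hbound _⟩) with hg
    have hfst : ∀ j : Fin m, (g j).1 ∈ s := fun j => by
      simp only [hg]; exact (e _).2
    have hsnd : ∀ j : Fin m, ((g j).2 : ℕ) + 1 = α ((g j).1) := fun j => by
      simp only [hg]; exact hadd _
    refine ⟨g, ?_⟩
    funext i
    simp only [hdec]
    apply le_antisymm
    · refine Finset.sup_le fun j _ => ?_
      by_cases hcond : (g j).1 = i
      · rw [if_pos hcond, hsnd j, hcond]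
      · rw [if_neg hcond]; exact Nat.zero_le _
    · by_cases hi : α i = 0
      · rw [hi]; exact Nat.zero_le _
      · have hi_mem : i ∈ s := by simp [hs, hi]
        obtain ⟨j₀, hj₀⟩ := e.surjective ⟨i, hi_mem⟩
        have hj₀m : (j₀ : ℕ) < m := lt_of_lt_of_le j₀.isLt hk_le
        set j : Fin m := ⟨j₀, hj₀m⟩ with hj
        have hidx : (⟨min (j : ℕ) (s.card - 1), by omega⟩ : Fin s.card) = j₀ := by
          apply Fin.ext
          have := j₀.isLt
          simp only [hj, Fin.val_mk]
          omega
        have hcond : (g j).1 = i := by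
          simp only [hg, hidx, hj₀]
        calc α i = (if (g j).1 = i then ((g j).2 : ℕ) + 1 else 0) := by
              rw [if_pos hcond, hsnd j, hcond]
          _ ≤ Finset.univ.sup (fun j => if (g j).1 = i then ((g j).2 : ℕ) + 1 else 0) :=
              Finset.le_sup (f := fun j => if (g j).1 = i then ((g j).2 : ℕ) + 1 else 0)
                (Finset.mem_univ j)
  choose f hf using key
  have hinj : Function.Injective f := fun a b hab => Subtype.ext (by rw [← hf a, ← hf b, hab])
  calc Nat.card {α : Fin N → ℕ // (∑ i, α i = 2 * m) ∧ ∀ i, α i ≠ 1}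
      ≤ Nat.card (Fin m → Fin N × Fin (2 * m)) := Nat.card_le_card_of_injective f hinj
    _ = (N * (2 * m)) ^ m := by
        simp [Nat.card_eq_fintype_card, Fintype.card_fun]
    _ = (2 * m) ^ m * N ^ m := by rw [mul_pow, mul_comm]
    _ ≤ 2 * ((2 * m) ^ m * N ^ m) := Nat.le_mul_of_pos_left _ two_pos
    _ = 2 * (2 * m) ^ m * N ^ m := by ring
end

section
/- Let m, N be positive integers with N ≥ (2m)² and let X be a Poisson random variable with parameter N. Then E[exp(2m|X − N|/√N)] ≤ 2 e^{(2m)²}, and consequently E[|X − N|^{2m}] ≤ 2 e^{(2m)²} N^m. -/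
open MeasureTheory

private lemma tsum_exp_series (x : ℝ) :
    ∑' n : ℕ, x ^ n / (n.factorial : ℝ) = Real.exp x := by
  rw [Real.exp_eq_exp_ℝ, NormedSpace.exp_eq_tsum_div]

private lemma poisson_term_eq (N : ℕ) (a : ℝ) (k : ℕ) :
    Real.exp (-(N : ℝ)) * (N : ℝ) ^ k / (k.factorial : ℝ) * Real.exp (a * ((k : ℝ) - N))
      = Real.exp (-(N : ℝ) - a * N) * (((N : ℝ) * Real.exp a) ^ k / (k.factorial : ℝ)) := by
  have h1 : Real.exp (a * ((k : ℝ) - N)) = Real.exp a ^ k * Real.exp (-(a * (N : ℝ))) := by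
    rw [← Real.exp_nat_mul, ← Real.exp_add]
    congr 1
    ring
  have h2 : Real.exp (-(N : ℝ) - a * N) = Real.exp (-(N : ℝ)) * Real.exp (-(a * (N : ℝ))) := by
    rw [sub_eq_add_neg, Real.exp_add]
  rw [h1, h2, mul_pow]
  ring

private lemma poisson_mgf_summable (N : ℕ) (a : ℝ) :
    Summable (fun k : ℕ => Real.exp (-(N : ℝ)) * (N : ℝ) ^ k / (k.factorial : ℝ) *
      Real.exp (a * ((k : ℝ) - N))) := by
  simp only [poisson_term_eq]
  exact (Real.summable_pow_div_factorial _).mul_left _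

private lemma poisson_mgf_tsum (N : ℕ) (a : ℝ) :
    ∑' k : ℕ, Real.exp (-(N : ℝ)) * (N : ℝ) ^ k / (k.factorial : ℝ) * Real.exp (a * ((k : ℝ) - N))
      = Real.exp ((N : ℝ) * Real.exp a - N - a * N) := by
  simp only [poisson_term_eq]
  rw [tsum_mul_left, tsum_exp_series, ← Real.exp_add]
  congr 1
  ring

private lemma exp_le_quadratic {x : ℝ} (hx : |x| ≤ 1) : Real.exp x ≤ 1 + x + x ^ 2 := by
  have h := Real.exp_bound hx (n := 2) (by norm_num)
  have h2 : ∑ i ∈ Finset.range 2, x ^ i / (i.factorial : ℝ) = 1 + x := by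
    simp [Finset.sum_range_succ]
  rw [h2] at h
  have h3 := (abs_le.mp h).2
  have hx2 : |x| ^ 2 = x ^ 2 := sq_abs x
  norm_num at h3
  nlinarith [sq_abs x]

/-- Exponential moment and `2m`-th moment bounds for a Poisson random variable `X` with
parameter `N ≥ (2m)²`: `E[exp(2m|X − N|/√N)] ≤ 2 e^{(2m)²}` and consequently
`E[|X − N|^{2m}] ≤ 2 e^{(2m)²} N^m`. -/
theorem poisson_exp_and_moment_bound (m N : ℕ) (hm : 0 < m) (hN : (2 * m) ^ 2 ≤ N)
    {Ω : Type*} [MeasurableSpace Ω] (P : Measure Ω) [IsProbabilityMeasure P]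
    (X : Ω → ℕ) (hX : Measurable X)
    (hpois : ∀ k : ℕ, P {ω | X ω = k} =
      ENNReal.ofReal (Real.exp (-(N : ℝ)) * (N : ℝ) ^ k / (Nat.factorial k))) :
    (∫ ω, Real.exp (2 * m * |(X ω : ℝ) - N| / Real.sqrt N) ∂P ≤
        2 * Real.exp ((2 * (m : ℝ)) ^ 2)) ∧
    (∫ ω, |(X ω : ℝ) - N| ^ (2 * m) ∂P ≤
        2 * Real.exp ((2 * (m : ℝ)) ^ 2) * (N : ℝ) ^ m) := by
  classical
  set p : ℕ → ℝ := fun k => Real.exp (-(N : ℝ)) * (N : ℝ) ^ k / (k.factorial : ℝ) with hpdef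
  have hp_nonneg : ∀ k, 0 ≤ p k := fun k => by positivity
  have hNpos : 0 < N := lt_of_lt_of_le (by positivity) hN
  have hNR : (0 : ℝ) < N := by exact_mod_cast hNpos
  have hsqrt_pos : 0 < Real.sqrt N := Real.sqrt_pos.mpr hNR
  set t : ℝ := 2 * (m : ℝ) / Real.sqrt N with htdef
  have hmR : (0 : ℝ) < m := by exact_mod_cast hm
  have ht_pos : 0 < t := div_pos (by positivity) hsqrt_pos
  have h2m : (2 * (m : ℝ)) ^ 2 ≤ N := by exact_mod_cast hN
  have hsqle : 2 * (m : ℝ) ≤ Real.sqrt N := by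
    rw [show 2 * (m : ℝ) = Real.sqrt ((2 * (m : ℝ)) ^ 2) from (Real.sqrt_sq (by positivity)).symm]
    exact Real.sqrt_le_sqrt h2m
  have ht_le1 : t ≤ 1 := by
    rw [htdef, div_le_one hsqrt_pos]; exact hsqle
  have ht2N : t ^ 2 * N = (2 * (m : ℝ)) ^ 2 := by
    rw [htdef, div_pow, Real.sq_sqrt hNR.le]
    field_simp
  -- reduction of integrals to sums
  have hmap : ∀ k : ℕ, (P.map X) {k} = ENNReal.ofReal (p k) := by
    intro k
    rw [Measure.map_apply hX (measurableSet_singleton k)]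
    exact hpois k
  have key : ∀ f : ℕ → ℝ, (∀ k, 0 ≤ f k) →
      ∫ ω, f (X ω) ∂P = (∑' k : ℕ, ENNReal.ofReal (f k * p k)).toReal := by
    intro f hf
    have hfm : Measurable f := measurable_of_countable f
    rw [integral_eq_lintegral_of_nonneg_ae (Filter.Eventually.of_forall fun ω => hf _)
      ((hfm.comp hX).aestronglyMeasurable)]
    congr 1
    have : ∫⁻ ω, ENNReal.ofReal (f (X ω)) ∂P
        = ∫⁻ k, ENNReal.ofReal (f k) ∂(P.map X) :=
      (lintegral_map (f := fun k => ENNReal.ofReal (f k)) (measurable_of_countable _) hX).symm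
    rw [this, lintegral_countable' (fun k => ENNReal.ofReal (f k)) (μ := P.map X)]
    congr 1
    funext k
    rw [hmap k, ← ENNReal.ofReal_mul (hf k)]
  -- exponential bound pointwise
  have hexp_pt : ∀ k : ℕ, Real.exp (t * |(k : ℝ) - N|) * p k ≤
      p k * Real.exp (t * ((k : ℝ) - N)) + p k * Real.exp (-t * ((k : ℝ) - N)) := by
    intro k
    rcases abs_cases ((k : ℝ) - N) with ⟨h1, _⟩ | ⟨h1, _⟩ <;> rw [h1]
    · nlinarith [hp_nonneg k, (Real.exp_pos (-t * ((k : ℝ) - N))).le]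
    · rw [show t * -((k : ℝ) - N) = -t * ((k : ℝ) - N) from by ring]
      nlinarith [hp_nonneg k, (Real.exp_pos (t * ((k : ℝ) - N))).le]
  have hmgf_bound : ∀ a : ℝ, |a| ≤ 1 →
      Real.exp ((N : ℝ) * Real.exp a - N - a * N) ≤ Real.exp (a ^ 2 * N) := by
    intro a ha
    apply Real.exp_le_exp.mpr
    have := exp_le_quadratic ha
    nlinarith [hNR.le]
  have hs1 : Summable (fun k : ℕ => p k * Real.exp (t * ((k : ℝ) - N))) :=
    poisson_mgf_summable N t
  have hs2 : Summable (fun k : ℕ => p k * Real.exp (-t * ((k : ℝ) - N))) :=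
    poisson_mgf_summable N (-t)
  have e1 : ∑' k : ℕ, p k * Real.exp (t * ((k : ℝ) - N))
      = Real.exp ((N : ℝ) * Real.exp t - N - t * N) := poisson_mgf_tsum N t
  have e2 : ∑' k : ℕ, p k * Real.exp (-t * ((k : ℝ) - N))
      = Real.exp ((N : ℝ) * Real.exp (-t) - N - (-t) * N) := poisson_mgf_tsum N (-t)
  have habs_t : |t| ≤ 1 := by rw [abs_of_pos ht_pos]; exact ht_le1
  have habs_nt : |(-t)| ≤ 1 := by rw [abs_neg]; exact habs_t
  have key1 : ∑' k : ℕ, ENNReal.ofReal (Real.exp (t * |(k : ℝ) - N|) * p k)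
      ≤ ENNReal.ofReal (2 * Real.exp ((2 * (m : ℝ)) ^ 2)) := by
    calc ∑' k : ℕ, ENNReal.ofReal (Real.exp (t * |(k : ℝ) - N|) * p k)
        ≤ ∑' k : ℕ, ENNReal.ofReal (p k * Real.exp (t * ((k : ℝ) - N))
            + p k * Real.exp (-t * ((k : ℝ) - N))) :=
          ENNReal.tsum_le_tsum fun k => ENNReal.ofReal_le_ofReal (hexp_pt k)
      _ = ∑' k : ℕ, (ENNReal.ofReal (p k * Real.exp (t * ((k : ℝ) - N)))
            + ENNReal.ofReal (p k * Real.exp (-t * ((k : ℝ) - N)))) := by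
          congr 1; funext k
          rw [ENNReal.ofReal_add (by positivity) (by positivity)]
      _ = (∑' k : ℕ, ENNReal.ofReal (p k * Real.exp (t * ((k : ℝ) - N))))
            + ∑' k : ℕ, ENNReal.ofReal (p k * Real.exp (-t * ((k : ℝ) - N))) :=
          ENNReal.tsum_add
      _ = ENNReal.ofReal (∑' k : ℕ, p k * Real.exp (t * ((k : ℝ) - N)))
            + ENNReal.ofReal (∑' k : ℕ, p k * Real.exp (-t * ((k : ℝ) - N))) := by
          rw [ENNReal.ofReal_tsum_of_nonneg (fun k => by positivity) hs1,
            ENNReal.ofReal_tsum_of_nonneg (fun k => by positivity) hs2]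
      _ ≤ ENNReal.ofReal (Real.exp ((2 * (m : ℝ)) ^ 2))
            + ENNReal.ofReal (Real.exp ((2 * (m : ℝ)) ^ 2)) := by
          gcongr
          · rw [e1, ← ht2N]
            exact hmgf_bound t habs_t
          · rw [e2, ← ht2N]
            have := hmgf_bound (-t) habs_nt
            rwa [neg_sq] at this
      _ = ENNReal.ofReal (2 * Real.exp ((2 * (m : ℝ)) ^ 2)) := by
          rw [← ENNReal.ofReal_add (by positivity) (by positivity)]
          ring_nf
  -- pointwise power bound
  have hpow_pt : ∀ k : ℕ, |(k : ℝ) - N| ^ (2 * m) * p k ≤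
      (N : ℝ) ^ m * (Real.exp (t * |(k : ℝ) - N|) * p k) := by
    intro k
    set y : ℝ := |(k : ℝ) - N| with hy
    have hy0 : 0 ≤ y := abs_nonneg _
    have h1 : (t * y) ^ (2 * m) / (((2 * m).factorial : ℕ) : ℝ) ≤ Real.exp (t * y) :=
      Real.pow_div_factorial_le_exp (x := t * y) (by positivity) (2 * m)
    have hfact : (((2 * m).factorial : ℕ) : ℝ) ≤ (2 * (m : ℝ)) ^ (2 * m) := by
      have := Nat.factorial_le_pow (2 * m)
      calc (((2 * m).factorial : ℕ) : ℝ) ≤ (((2 * m) ^ (2 * m) : ℕ) : ℝ) := by exact_mod_cast this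
        _ = (2 * (m : ℝ)) ^ (2 * m) := by push_cast; ring
    have hC : (0 : ℝ) < (2 * (m : ℝ)) ^ (2 * m) := by positivity
    have ht2m : t ^ (2 * m) * (N : ℝ) ^ m = (2 * (m : ℝ)) ^ (2 * m) := by
      rw [pow_mul, pow_mul, ← mul_pow, ht2N]
    have hfac_pos : (0 : ℝ) < (((2 * m).factorial : ℕ) : ℝ) := by positivity
    have h1' : (t * y) ^ (2 * m) ≤ (((2 * m).factorial : ℕ) : ℝ) * Real.exp (t * y) := by
      rw [div_le_iff₀ hfac_pos] at h1
      linarith [h1]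
    have step : y ^ (2 * m) * (2 * (m : ℝ)) ^ (2 * m)
        ≤ (N : ℝ) ^ m * Real.exp (t * y) * (2 * (m : ℝ)) ^ (2 * m) := by
      calc y ^ (2 * m) * (2 * (m : ℝ)) ^ (2 * m)
          = (t * y) ^ (2 * m) * (N : ℝ) ^ m := by rw [← ht2m]; ring
        _ ≤ ((((2 * m).factorial : ℕ) : ℝ) * Real.exp (t * y)) * (N : ℝ) ^ m := by
            gcongr
        _ ≤ ((2 * (m : ℝ)) ^ (2 * m) * Real.exp (t * y)) * (N : ℝ) ^ m := by
            gcongr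
        _ = (N : ℝ) ^ m * Real.exp (t * y) * (2 * (m : ℝ)) ^ (2 * m) := by ring
    have hyle : y ^ (2 * m) ≤ (N : ℝ) ^ m * Real.exp (t * y) :=
      le_of_mul_le_mul_right step hC
    calc y ^ (2 * m) * p k ≤ ((N : ℝ) ^ m * Real.exp (t * y)) * p k := by
          exact mul_le_mul_of_nonneg_right hyle (hp_nonneg k)
      _ = (N : ℝ) ^ m * (Real.exp (t * y) * p k) := by ring
  have key2 : ∑' k : ℕ, ENNReal.ofReal (|(k : ℝ) - N| ^ (2 * m) * p k)
      ≤ ENNReal.ofReal (2 * Real.exp ((2 * (m : ℝ)) ^ 2) * (N : ℝ) ^ m) := by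
    calc ∑' k : ℕ, ENNReal.ofReal (|(k : ℝ) - N| ^ (2 * m) * p k)
        ≤ ∑' k : ℕ, ENNReal.ofReal ((N : ℝ) ^ m * (Real.exp (t * |(k : ℝ) - N|) * p k)) :=
          ENNReal.tsum_le_tsum fun k => ENNReal.ofReal_le_ofReal (hpow_pt k)
      _ = ∑' k : ℕ, ENNReal.ofReal ((N : ℝ) ^ m)
            * ENNReal.ofReal (Real.exp (t * |(k : ℝ) - N|) * p k) := by
          congr 1; funext k
          rw [← ENNReal.ofReal_mul (by positivity)]
      _ = ENNReal.ofReal ((N : ℝ) ^ m)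
            * ∑' k : ℕ, ENNReal.ofReal (Real.exp (t * |(k : ℝ) - N|) * p k) :=
          ENNReal.tsum_mul_left
      _ ≤ ENNReal.ofReal ((N : ℝ) ^ m) * ENNReal.ofReal (2 * Real.exp ((2 * (m : ℝ)) ^ 2)) :=
          mul_le_mul_right key1 _
      _ = ENNReal.ofReal (2 * Real.exp ((2 * (m : ℝ)) ^ 2) * (N : ℝ) ^ m) := by
          rw [← ENNReal.ofReal_mul (by positivity)]
          ring_nf
  constructor
  · have harg : ∀ x : ℝ, 2 * (m : ℝ) * x / Real.sqrt N = t * x := fun x => by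
      rw [htdef]; ring
    have h0 := key (fun k : ℕ => Real.exp (2 * (m : ℝ) * |(k : ℝ) - N| / Real.sqrt N))
      (fun k => (Real.exp_pos _).le)
    calc ∫ ω, Real.exp (2 * (m : ℝ) * |(X ω : ℝ) - N| / Real.sqrt N) ∂P
        = (∑' k : ℕ, ENNReal.ofReal
            (Real.exp (2 * (m : ℝ) * |(k : ℝ) - N| / Real.sqrt N) * p k)).toReal := h0
      _ ≤ 2 * Real.exp ((2 * (m : ℝ)) ^ 2) := by
          apply ENNReal.toReal_le_of_le_ofReal (by positivity)
          refine le_trans (le_of_eq ?_) key1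
          congr 1
          funext k
          rw [harg]
  · calc ∫ ω, |(X ω : ℝ) - N| ^ (2 * m) ∂P
        = (∑' k : ℕ, ENNReal.ofReal (|(k : ℝ) - N| ^ (2 * m) * p k)).toReal :=
          key (fun k : ℕ => |(k : ℝ) - N| ^ (2 * m)) (fun k => by positivity)
      _ ≤ 2 * Real.exp ((2 * (m : ℝ)) ^ 2) * (N : ℝ) ^ m :=
          ENNReal.toReal_le_of_le_ofReal (by positivity) key2
end
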